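/- arXiv:2405.05280 — 8 statements merged into one kernel-verified Lean document; each statement's English description precedes it below -/
import Mathlib

section
/- For every positive integer n, the ratio B_{2n-1}(t)/B_{2n+1}(t) of Bernoulli polynomials is strictly increasing in t on the open interval (0, 1/2) and strictly decreasing on (1/2, 1). -/
/-!
For `k ≥ 1` the functions `u k = (-1)^(k+1) B_{2k+1}` vanish at `0` and `1/2` and satisfy
`(u (k+1))'' = -(2k+3)(2k+2) u k`, so `u (k+1) = (2k+3)(2k+2) G (u k)` with `G` Green's operator of
`-d²/dt²` on `[0, 1/2]`. Its kernel `min(t,s) (1 - 2 max(t,s))` is positive and totally positive of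
order two, so `G` preserves positivity and, by symmetrising a double integral, the property that
`u / v` is decreasing. Starting from the explicit pair `u 0 = 1/2 - t`, `u 1 = B_3`, every
`u k / u (k+1) = -B_{2k+1} / B_{2k+3}` is decreasing on `(0, 1/2)`. Strictness holds because
Bernoulli polynomials of different degrees are not proportional on an interval, and the behaviour
on `(1/2, 1)` follows from `B_m(1 - t) = (-1)^m B_m(t)`.
-/
open Set Real Filter

noncomputable def B (n : ℕ) (t : ℝ) : ℝ := Polynomial.aeval t (Polynomial.bernoulli n)

noncomputable def Bnum (n : ℕ) : ℝ := ((bernoulli n : ℚ) : ℝ)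

open MeasureTheory

theorem setIntegral_mul_setIntegral_le {α : Type*} [MeasurableSpace α] {μ : Measure α}
    [SFinite μ] {S : Set α} (hS : MeasurableSet S) {K₁ K₂ u v : α → ℝ}
    (h₁u : IntegrableOn (fun x => K₁ x * u x) S μ) (h₂u : IntegrableOn (fun x => K₂ x * u x) S μ)
    (h₁v : IntegrableOn (fun x => K₁ x * v x) S μ) (h₂v : IntegrableOn (fun x => K₂ x * v x) S μ)
    (h : ∀ x ∈ S, ∀ y ∈ S, 0 ≤ (K₁ x * K₂ y - K₂ x * K₁ y) * (u x * v y - u y * v x)) :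
    (∫ x in S, K₂ x * u x ∂μ) * (∫ x in S, K₁ x * v x ∂μ) ≤
      (∫ x in S, K₁ x * u x ∂μ) * (∫ x in S, K₂ x * v x ∂μ) := by
  set ν := μ.restrict S
  let F : α × α → ℝ := fun z =>
    K₁ z.1 * u z.1 * (K₂ z.2 * v z.2) - K₂ z.1 * u z.1 * (K₁ z.2 * v z.2)
  have hF : Integrable F (ν.prod ν) := (h₁u.mul_prod h₂v).sub (h₂u.mul_prod h₁v)
  have hdiff : ∫ z, F z ∂ν.prod ν = (∫ x, K₁ x * u x ∂ν) * (∫ x, K₂ x * v x ∂ν) -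
      (∫ x, K₂ x * u x ∂ν) * (∫ x, K₁ x * v x ∂ν) := by
    rw [integral_sub (h₁u.mul_prod h₂v) (h₂u.mul_prod h₁v),
      integral_prod_mul (fun x => K₁ x * u x) (fun x => K₂ x * v x),
      integral_prod_mul (fun x => K₂ x * u x) (fun x => K₁ x * v x)]
  have hsymm : 0 ≤ ∫ z, (F z + F z.swap) ∂ν.prod ν := by
    rw [Measure.prod_restrict]
    refine setIntegral_nonneg (hS.prod hS) fun z hz => ?_
    convert h z.1 hz.1 z.2 hz.2 using 1
    simp only [F, Prod.fst_swap, Prod.snd_swap]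
    ring
  have hswap : ∫ z, F z.swap ∂ν.prod ν = ∫ z, F z ∂ν.prod ν := integral_prod_swap F
  rw [integral_add hF (f := F) (g := fun z => F z.swap) hF.swap, hswap, hdiff] at hsymm
  linarith

lemma eq_zero_of_hasDerivAt_of_hasDerivAt_zero {f f' : ℝ → ℝ} {a b : ℝ}
    (hf : ∀ t, HasDerivAt f (f' t) t) (hf' : ∀ t, HasDerivAt f' 0 t) (hab : a ≠ b)
    (ha : f a = 0) (hb : f b = 0) : f = 0 := by
  have hconst : ∀ t, f' t = f' a := fun t =>
    is_const_of_deriv_eq_zero (fun x => (hf' x).differentiableAt) (fun x => (hf' x).deriv) t a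
  have hd : ∀ x, HasDerivAt (fun t => f t - f' a * t) 0 x := fun x =>
    ((hf x).sub ((hasDerivAt_id x).const_mul (f' a))).congr_deriv (by simp [hconst x])
  have haffine : ∀ t, f t - f' a * t = f a - f' a * a := fun t =>
    is_const_of_deriv_eq_zero (fun x => (hd x).differentiableAt) (fun x => (hd x).deriv) t a
  have hslope : f' a = 0 := by
    have := haffine b
    rw [ha, hb] at this
    exact (mul_eq_zero.1 (by linarith : f' a * (b - a) = 0)).resolve_right (sub_ne_zero.2 hab.symm)
  ext t
  simpa [ha, hslope] using haffine t

lemma StrictMonoOn.of_monotoneOn_of_finite_fibers {f : ℝ → ℝ} {s : Set ℝ} [s.OrdConnected]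
    (hf : MonotoneOn f s) (hfin : ∀ c, {t ∈ s | f t = c}.Finite) : StrictMonoOn f s := by
  intro x hx y hy hxy
  refine (hf hx hy hxy.le).lt_of_ne fun heq => (Icc_infinite hxy) ((hfin (f x)).subset ?_)
  intro t ht
  have hts : t ∈ s := Set.Icc_subset s hx hy ht
  exact ⟨hts, le_antisymm (heq ▸ hf hts hy ht.2) (hf hx hts ht.1)⟩

section Green

/-- Green's operator of `-d²/dt²` on `[0, 1/2]` with Dirichlet boundary conditions. -/
noncomputable def greenOp (g : ℝ → ℝ) (t : ℝ) : ℝ :=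
  (1 - 2 * t) * (∫ s in (0:ℝ)..t, s * g s) + t * ∫ s in t..(1 / 2 : ℝ), (1 - 2 * s) * g s

noncomputable def greenKernel (t s : ℝ) : ℝ := min t s * (1 - 2 * max t s)

variable {g : ℝ → ℝ}

lemma hasDerivAt_integral_id_mul (hg : Continuous g) (t : ℝ) :
    HasDerivAt (fun t => ∫ s in (0:ℝ)..t, s * g s) (t * g t) t :=
  intervalIntegral.integral_hasDerivAt_right ((continuous_id.mul hg).intervalIntegrable _ _)
    ((continuous_id.mul hg).stronglyMeasurableAtFilter _ _) (continuous_id.mul hg).continuousAt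

lemma hasDerivAt_integral_one_sub_two_mul (hg : Continuous g) (t : ℝ) :
    HasDerivAt (fun t => ∫ s in t..(1 / 2 : ℝ), (1 - 2 * s) * g s) (-((1 - 2 * t) * g t)) t := by
  have hc : Continuous fun s : ℝ => (1 - 2 * s) * g s := by fun_prop
  exact intervalIntegral.integral_hasDerivAt_left (hc.intervalIntegrable _ _)
    (hc.stronglyMeasurableAtFilter _ _) hc.continuousAt

lemma hasDerivAt_greenOp (hg : Continuous g) (t : ℝ) :
    HasDerivAt (greenOp g)
      (-2 * (∫ s in (0:ℝ)..t, s * g s) + ∫ s in t..(1 / 2 : ℝ), (1 - 2 * s) * g s) t := by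
  refine ((((hasDerivAt_id t).const_mul 2).const_sub 1).mul (hasDerivAt_integral_id_mul hg t)
    |>.add ((hasDerivAt_id t).mul (hasDerivAt_integral_one_sub_two_mul hg t))).congr_deriv ?_
  simp only [id]
  ring

lemma hasDerivAt_deriv_greenOp (hg : Continuous g) (t : ℝ) :
    HasDerivAt
      (fun t => -2 * (∫ s in (0:ℝ)..t, s * g s) + ∫ s in t..(1 / 2 : ℝ), (1 - 2 * s) * g s)
      (-g t) t :=
  (((hasDerivAt_integral_id_mul hg t).const_mul (-2)).add
    (hasDerivAt_integral_one_sub_two_mul hg t)).congr_deriv (by ring)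

lemma eq_greenOp {f f' : ℝ → ℝ} (hg : Continuous g) (hf : ∀ t, HasDerivAt f (f' t) t)
    (hf' : ∀ t, HasDerivAt f' (-g t) t) (h₀ : f 0 = 0) (h₁ : f (1 / 2) = 0) :
    f = greenOp g := by
  refine sub_eq_zero.1 (eq_zero_of_hasDerivAt_of_hasDerivAt_zero
    (fun t => (hf t).sub (hasDerivAt_greenOp hg t))
    (fun t => ((hf' t).sub (hasDerivAt_deriv_greenOp hg t)).congr_deriv (by ring))
    (by norm_num : (0:ℝ) ≠ 1 / 2) ?_ ?_)
  · simp [h₀, greenOp]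
  · simp only [Pi.sub_apply, h₁, greenOp]
    norm_num

lemma greenOp_pos (hg : Continuous g) (hpos : ∀ s ∈ Ioo (0:ℝ) (1 / 2), 0 < g s) {t : ℝ}
    (ht : t ∈ Ioo (0:ℝ) (1 / 2)) : 0 < greenOp g t := by
  obtain ⟨ht₀, ht₁⟩ := ht
  have hleft : 0 < ∫ s in (0:ℝ)..t, s * g s :=
    intervalIntegral.intervalIntegral_pos_of_pos_on ((continuous_id.mul hg).intervalIntegrable _ _)
      (fun s hs => mul_pos hs.1 (hpos s ⟨hs.1, hs.2.trans ht₁⟩)) ht₀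
  have hright : 0 < ∫ s in t..(1 / 2 : ℝ), (1 - 2 * s) * g s :=
    intervalIntegral.intervalIntegral_pos_of_pos_on
      (Continuous.intervalIntegrable (by fun_prop) _ _)
      (fun s hs => mul_pos (by linarith [hs.2]) (hpos s ⟨ht₀.trans hs.1, hs.2⟩)) ht₁
  unfold greenOp
  have : 0 < 1 - 2 * t := by linarith
  positivity

lemma greenOp_eq_integral_greenKernel (hg : Continuous g) {t : ℝ}
    (ht : t ∈ Icc (0:ℝ) (1 / 2)) :
    greenOp g t = ∫ s in Ioo (0:ℝ) (1 / 2), greenKernel t s * g s := by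
  have hint : ∀ a b, IntervalIntegrable (fun s => greenKernel t s * g s) volume a b := fun a b =>
    Continuous.intervalIntegrable (by unfold greenKernel; fun_prop) a b
  rw [← integral_Ioc_eq_integral_Ioo, ← intervalIntegral.integral_of_le (by norm_num),
    ← intervalIntegral.integral_add_adjacent_intervals (hint 0 t) (hint t (1 / 2)), greenOp,
    ← intervalIntegral.integral_const_mul, ← intervalIntegral.integral_const_mul]
  congr 1
  · refine intervalIntegral.integral_congr fun s hs => ?_
    rw [uIcc_of_le ht.1] at hs
    simp only [greenKernel, min_eq_right hs.2, max_eq_left hs.2]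
    ring
  · refine intervalIntegral.integral_congr fun s hs => ?_
    rw [uIcc_of_le ht.2] at hs
    simp only [greenKernel, min_eq_left hs.1, max_eq_right hs.1]
    ring

lemma greenKernel_mul_le {t₁ t₂ x y : ℝ} (h₀ : 0 ≤ t₁) (ht : t₁ ≤ t₂) (h₂ : t₂ ≤ 1 / 2)
    (hx : 0 ≤ x) (hxy : x ≤ y) (hy : y ≤ 1 / 2) :
    greenKernel t₂ x * greenKernel t₁ y ≤ greenKernel t₁ x * greenKernel t₂ y := by
  -- depending on the position of `x, y` relative to `t₁, t₂`, the difference is zero or one of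
  -- `x(1-2t₂)(y-t₁)`, `x(1-2y)(t₂-t₁)`, `t₁(1-2t₂)(y-x)`, `t₁(1-2y)(t₂-x)`
  have hx₂ : 0 ≤ x * (1 - 2 * t₂) := mul_nonneg hx (by linarith)
  have hy₁ : 0 ≤ t₁ * (1 - 2 * y) := mul_nonneg h₀ (by linarith)
  simp only [greenKernel, min_def, max_def]
  split_ifs <;>
    nlinarith [mul_nonneg (mul_nonneg hx (by linarith : 0 ≤ 1 - 2 * y)) (sub_nonneg.2 ht),
      mul_nonneg (mul_nonneg h₀ (by linarith : 0 ≤ 1 - 2 * t₂)) (sub_nonneg.2 hxy)]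

end Green

/-- For `v > 0` this says that `u / v` is antitone on `(0, 1/2)`. -/
def RatioAntitone (u v : ℝ → ℝ) : Prop :=
  ∀ x ∈ Ioo (0:ℝ) (1 / 2), ∀ y ∈ Ioo (0:ℝ) (1 / 2), x ≤ y → u y * v x ≤ u x * v y

namespace RatioAntitone

variable {u v : ℝ → ℝ}

lemma const_mul {a b : ℝ} (ha : 0 ≤ a) (hb : 0 ≤ b) (h : RatioAntitone u v) :
    RatioAntitone (fun t => a * u t) (fun t => b * v t) := fun x hx y hy hxy => by
  have := mul_le_mul_of_nonneg_left (h x hx y hy hxy) (mul_nonneg ha hb)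
  linarith

lemma greenOp (hu : Continuous u) (hv : Continuous v) (h : RatioAntitone u v) :
    RatioAntitone (greenOp u) (greenOp v) := by
  intro t₁ ht₁ t₂ ht₂ ht
  have hint : ∀ t {g : ℝ → ℝ}, Continuous g →
      IntegrableOn (fun s => greenKernel t s * g s) (Ioo (0:ℝ) (1 / 2)) :=
    fun t g hg => (Continuous.integrableOn_Icc (by unfold greenKernel; fun_prop)).mono_set
      Ioo_subset_Icc_self
  simp only [greenOp_eq_integral_greenKernel hu (Ioo_subset_Icc_self ht₁),
    greenOp_eq_integral_greenKernel hu (Ioo_subset_Icc_self ht₂),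
    greenOp_eq_integral_greenKernel hv (Ioo_subset_Icc_self ht₁),
    greenOp_eq_integral_greenKernel hv (Ioo_subset_Icc_self ht₂)]
  refine setIntegral_mul_setIntegral_le measurableSet_Ioo (hint t₁ hu) (hint t₂ hu)
    (hint t₁ hv) (hint t₂ hv) fun x hx y hy => ?_
  rcases le_total x y with hxy | hyx
  · exact mul_nonneg
      (sub_nonneg.2 (greenKernel_mul_le ht₁.1.le ht ht₂.2.le hx.1.le hxy hy.2.le))
      (sub_nonneg.2 (h x hx y hy hxy))
  · have hK := greenKernel_mul_le ht₁.1.le ht ht₂.2.le hy.1.le hyx hx.2.le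
    have huv := h y hy x hx hyx
    exact mul_nonneg_of_nonpos_of_nonpos (by linarith) (by linarith)

lemma antitoneOn_div (h : RatioAntitone u v) (hv : ∀ t ∈ Ioo (0:ℝ) (1 / 2), 0 < v t) :
    AntitoneOn (fun t => u t / v t) (Ioo (0:ℝ) (1 / 2)) := fun x hx y hy hxy =>
  (div_le_div_iff₀ (hv y hy) (hv x hx)).2 (h x hx y hy hxy)

end RatioAntitone

lemma B_eq_bernoulliFun : B = bernoulliFun := by
  ext n t
  simp [B, bernoulliFun, Polynomial.aeval_def, Polynomial.eval_map]

lemma bernoulliFun_odd_eval_zero {k : ℕ} (hk : k ≠ 0) : bernoulliFun (2 * k + 1) 0 = 0 := by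
  rw [bernoulliFun_eval_zero, bernoulli_eq_bernoulli'_of_ne_one (by omega),
    bernoulli'_eq_zero_of_odd (odd_two_mul_add_one k) (by omega), Rat.cast_zero]

lemma bernoulliFun_three (t : ℝ) : bernoulliFun 3 t = t ^ 3 - 3 / 2 * t ^ 2 + 1 / 2 * t := by
  simp [bernoulliFun, Polynomial.bernoulli_def, Finset.sum_range_succ,
    bernoulli_eq_bernoulli'_of_ne_one, bernoulli'_two, bernoulli'_three]
  ring

lemma setOf_bernoulliFun_eq_const_mul_finite (n : ℕ) (c : ℝ) :
    {t | bernoulliFun n t = c * bernoulliFun (n + 2) t}.Finite := by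
  by_contra hinf
  set P : ℕ → Polynomial ℝ := fun m => (Polynomial.bernoulli m).map (algebraMap ℚ ℝ)
  have hmonic (m : ℕ) : (P m).coeff m = 1 := by simp [P, Polynomial.coeff_bernoulli]
  have hdeg : (P n).coeff (n + 2) = 0 := by simp [P, Polynomial.coeff_bernoulli]
  have hP : P n = Polynomial.C c * P (n + 2) :=
    Polynomial.eq_of_infinite_eval_eq _ _ (by simpa [P, bernoulliFun] using hinf)
  have hc : 0 = c := by simpa [hdeg, hmonic] using congrArg (Polynomial.coeff · (n + 2)) hP
  simpa [← hc, hmonic] using congrArg (Polynomial.coeff · n) hP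

/-- `B_{2k+1}` with the sign that makes it positive on `(0, 1/2)`. -/
noncomputable def oddBernoulliFun (k : ℕ) (t : ℝ) : ℝ :=
  (-1) ^ (k + 1) * bernoulliFun (2 * k + 1) t

lemma continuous_oddBernoulliFun (k : ℕ) : Continuous (oddBernoulliFun k) :=
  continuous_const.mul (continuous_bernoulliFun _)

lemma oddBernoulliFun_zero (t : ℝ) : oddBernoulliFun 0 t = 1 / 2 - t := by
  simp [oddBernoulliFun]

lemma oddBernoulliFun_add_one_apply (k : ℕ) (t : ℝ) :
    oddBernoulliFun (k + 1) t = (-1) ^ (k + 2) * bernoulliFun (2 * k + 3) t := by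
  simp only [oddBernoulliFun, show 2 * (k + 1) + 1 = 2 * k + 3 by ring]

lemma oddBernoulliFun_succ (k : ℕ) :
    oddBernoulliFun (k + 1) =
      fun t => ((2 * k + 3) * (2 * k + 2) : ℝ) * greenOp (oddBernoulliFun k) t := by
  set c : ℝ := (2 * k + 3) * (2 * k + 2)
  have hc : c ≠ 0 := by positivity
  have hB₃ (t : ℝ) :
      HasDerivAt (bernoulliFun (2 * k + 3)) ((2 * k + 3) * bernoulliFun (2 * k + 2) t) t := by
    simpa using hasDerivAt_bernoulliFun (2 * k + 3) t
  have hB₂ (t : ℝ) :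
      HasDerivAt (bernoulliFun (2 * k + 2)) ((2 * k + 2) * bernoulliFun (2 * k + 1) t) t := by
    simpa using hasDerivAt_bernoulliFun (2 * k + 2) t
  have hzero : bernoulliFun (2 * k + 3) 0 = 0 := bernoulliFun_odd_eval_zero (k := k + 1) (by omega)
  have hhalf : bernoulliFun (2 * k + 3) (1 / 2) = 0 := by
    rw [one_div]
    exact bernoulliFun_eval_half_eq_zero (k + 1)
  have hgreen : (fun t => (-1) ^ (k + 2) * bernoulliFun (2 * k + 3) t / c) =
      greenOp (oddBernoulliFun k) := by
    refine eq_greenOp (continuous_oddBernoulliFun k)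
      (f' := fun t => (-1) ^ (k + 2) * ((2 * k + 3) * bernoulliFun (2 * k + 2) t) / c)
      (fun t => ((hB₃ t).const_mul _).div_const c) (fun t => ?_) ?_ ?_
    · refine (((hB₂ t).const_mul (2 * k + 3 : ℝ)).const_mul ((-1) ^ (k + 2))
        |>.div_const c).congr_deriv ?_
      simp only [oddBernoulliFun, c, pow_succ]
      field_simp
    · simp [hzero]
    · norm_num [hhalf]
  ext t
  rw [oddBernoulliFun_add_one_apply, ← hgreen]
  field_simp

lemma oddBernoulliFun_pos (k : ℕ) {t : ℝ} (ht : t ∈ Ioo (0:ℝ) (1 / 2)) :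
    0 < oddBernoulliFun k t := by
  induction k generalizing t with
  | zero => rw [oddBernoulliFun_zero]; linarith [ht.2]
  | succ k ih =>
    rw [oddBernoulliFun_succ]
    exact mul_pos (by positivity)
      (greenOp_pos (continuous_oddBernoulliFun k) (fun s hs => ih hs) ht)

lemma ratioAntitone_oddBernoulliFun (k : ℕ) :
    RatioAntitone (oddBernoulliFun k) (oddBernoulliFun (k + 1)) := by
  induction k with
  | zero =>
    intro x hx y hy hxy
    have hB : oddBernoulliFun 1 = bernoulliFun 3 := by ext t; simp [oddBernoulliFun]
    rw [hB, oddBernoulliFun_zero, oddBernoulliFun_zero, bernoulliFun_three, bernoulliFun_three]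
    -- the difference of the two sides is `(1/2 - x)(1/2 - y)(y - x)(1 - x - y)`
    nlinarith [mul_nonneg (mul_nonneg (sub_nonneg.2 hx.2.le) (sub_nonneg.2 hy.2.le))
      (mul_nonneg (sub_nonneg.2 hxy) (by linarith [hx.2, hy.2] : (0:ℝ) ≤ 1 - x - y))]
  | succ k ih =>
    rw [oddBernoulliFun_succ k, oddBernoulliFun_succ (k + 1)]
    exact (ih.greenOp (continuous_oddBernoulliFun k) (continuous_oddBernoulliFun (k + 1))).const_mul
      (by positivity) (by positivity)

lemma bernoulliFun_div_eq (k : ℕ) (t : ℝ) :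
    bernoulliFun (2 * k + 1) t / bernoulliFun (2 * k + 3) t =
      -(oddBernoulliFun k t / oddBernoulliFun (k + 1) t) := by
  rw [oddBernoulliFun_add_one_apply, oddBernoulliFun, pow_succ _ (k + 1), mul_assoc,
    mul_div_mul_left _ _ (pow_ne_zero _ (by norm_num)), neg_one_mul, div_neg, neg_neg]

lemma strictMonoOn_bernoulliFun_div (k : ℕ) :
    StrictMonoOn (fun t => bernoulliFun (2 * k + 1) t / bernoulliFun (2 * k + 3) t)
      (Ioo (0:ℝ) (1 / 2)) := by
  have hne {t : ℝ} (ht : t ∈ Ioo (0:ℝ) (1 / 2)) : bernoulliFun (2 * k + 3) t ≠ 0 := fun h => by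
    simpa [oddBernoulliFun_add_one_apply, h] using (oddBernoulliFun_pos (k + 1) ht).ne'
  have hmono : MonotoneOn (fun t => bernoulliFun (2 * k + 1) t / bernoulliFun (2 * k + 3) t)
      (Ioo (0:ℝ) (1 / 2)) := fun x hx y hy hxy => by
    simp only [bernoulliFun_div_eq, neg_le_neg_iff]
    exact (ratioAntitone_oddBernoulliFun k).antitoneOn_div
      (fun t ht => oddBernoulliFun_pos (k + 1) ht) hx hy hxy
  refine StrictMonoOn.of_monotoneOn_of_finite_fibers hmono fun c =>
    (setOf_bernoulliFun_eq_const_mul_finite (2 * k + 1) c).subset fun t ht => ?_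
  exact (div_eq_iff (hne ht.1)).1 ht.2

lemma strictAntiOn_bernoulliFun_div (k : ℕ) :
    StrictAntiOn (fun t => bernoulliFun (2 * k + 1) t / bernoulliFun (2 * k + 3) t)
      (Ioo (1 / 2 : ℝ) 1) := by
  have hsymm : (fun t => bernoulliFun (2 * k + 1) t / bernoulliFun (2 * k + 3) t) =
      (fun t => bernoulliFun (2 * k + 1) t / bernoulliFun (2 * k + 3) t) ∘ (fun t => 1 - t) := by
    ext t
    simp only [Function.comp, bernoulliFun_eval_one_sub, pow_succ, pow_mul]
    norm_num [neg_div_neg_eq]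
  rw [hsymm]
  exact (strictMonoOn_bernoulliFun_div k).comp_strictAntiOn (fun a _ b _ hab => by linarith)
    fun t ht => ⟨by linarith [ht.2], by linarith [ht.1]⟩

theorem stmt0 (n : ℕ) (hn : 1 ≤ n) :
    StrictMonoOn (fun t : ℝ => B (2*n-1) t / B (2*n+1) t) (Ioo (0:ℝ) (1/2)) ∧
    StrictAntiOn (fun t : ℝ => B (2*n-1) t / B (2*n+1) t) (Ioo (1/2:ℝ) 1) := by
  obtain ⟨k, rfl⟩ : ∃ k, n = k + 1 := ⟨n - 1, by omega⟩
  rw [B_eq_bernoulliFun, show 2 * (k + 1) - 1 = 2 * k + 1 by omega,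
    show 2 * (k + 1) + 1 = 2 * k + 3 by ring]
  exact ⟨strictMonoOn_bernoulliFun_div k, strictAntiOn_bernoulliFun_div k⟩
end

section
/- For every fixed real t in (0,1) with t \ne 1/2, the limit as n \to \infty of (2n+1) B_{2n}(t)/B_{2n+1}(t) equals 2\pi \cot(2\pi t). -/
open Set Real Filter
open scoped Nat

lemma tendsto_tsum_pow (ph : ℕ → ℝ) (hph : ∀ m, |ph m| ≤ 1) (e : ℕ → ℕ)
    (he : ∀ n, 2*n+2 ≤ e n) :
    Tendsto (fun n => ∑' m : ℕ, 1/(m:ℝ)^(e n) * ph m) atTop (nhds (ph 1)) := by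
  have h2s : Summable (fun m : ℕ => 1/(m:ℝ)^2) :=
    Real.summable_one_div_nat_pow.mpr (by norm_num)
  have hS : Summable (fun m : ℕ => 1/(((m+2:ℕ)):ℝ)^2) :=
    (summable_nat_add_iff (f := fun m : ℕ => 1/(m:ℝ)^2) 2).mpr h2s
  set S := ∑' m : ℕ, 1/(((m+2:ℕ)):ℝ)^2 with hSdef
  have hsum : ∀ n, Summable (fun m : ℕ => 1/(m:ℝ)^(e n) * ph m) := by
    intro n
    apply Summable.of_norm
    apply Summable.of_nonneg_of_le (fun m => norm_nonneg _) _
      (Real.summable_one_div_nat_pow.mpr (by omega : (1:ℕ) < 2))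
    intro m
    rcases Nat.eq_zero_or_pos m with hm | hm
    · subst hm
      simp [zero_pow (by have := he n; omega : e n ≠ 0)]
    · have h1 : (1:ℝ) ≤ (m:ℝ) := by exact_mod_cast hm
      have hp : (m:ℝ)^2 ≤ (m:ℝ)^(e n) := pow_le_pow_right₀ h1 (by have := he n; omega)
      have hpos : (0:ℝ) < (m:ℝ)^2 := by positivity
      calc ‖1/(m:ℝ)^(e n) * ph m‖ = 1/(m:ℝ)^(e n) * |ph m| := by
            rw [norm_mul, Real.norm_eq_abs, Real.norm_eq_abs, abs_of_nonneg (by positivity)]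
        _ ≤ 1/(m:ℝ)^(e n) * 1 := by
            apply mul_le_mul_of_nonneg_left (hph m) (by positivity)
        _ ≤ 1/(m:ℝ)^2 := by
            rw [mul_one]; exact one_div_le_one_div_of_le hpos hp
  have key : ∀ n, |(∑' m : ℕ, 1/(m:ℝ)^(e n) * ph m) - ph 1| ≤ (1/4:ℝ)^n * S := by
    intro n
    have hbound : ∀ m : ℕ, ‖1/(((m+2:ℕ)):ℝ)^(e n) * ph (m+2)‖ ≤
        (1/4:ℝ)^n * (1/(((m+2:ℕ)):ℝ)^2) := by
      intro m
      have h2 : (2:ℝ) ≤ ((m+2:ℕ):ℝ) := by exact_mod_cast Nat.le_add_left 2 m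
      have hpos2 : (0:ℝ) < ((m+2:ℕ):ℝ)^2 := by positivity
      have hge : (4:ℝ)^n * ((m+2:ℕ):ℝ)^2 ≤ ((m+2:ℕ):ℝ)^(e n) := by
        calc (4:ℝ)^n * ((m+2:ℕ):ℝ)^2 ≤ (((m+2:ℕ):ℝ)^2)^n * ((m+2:ℕ):ℝ)^2 := by
              apply mul_le_mul_of_nonneg_right _ (le_of_lt hpos2)
              apply pow_le_pow_left₀ (by norm_num)
              nlinarith
          _ = ((m+2:ℕ):ℝ)^(2*n+2) := by rw [← pow_mul, ← pow_add]
          _ ≤ ((m+2:ℕ):ℝ)^(e n) := pow_le_pow_right₀ (by linarith) (he n)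
      calc ‖1/(((m+2:ℕ)):ℝ)^(e n) * ph (m+2)‖ ≤ 1/(((m+2:ℕ)):ℝ)^(e n) * 1 := by
            rw [norm_mul, Real.norm_eq_abs, Real.norm_eq_abs, abs_of_nonneg (by positivity)]
            exact mul_le_mul_of_nonneg_left (hph _) (by positivity)
        _ = 1/(((m+2:ℕ)):ℝ)^(e n) := mul_one _
        _ ≤ 1/((4:ℝ)^n * ((m+2:ℕ):ℝ)^2) := by
            apply one_div_le_one_div_of_le (by positivity) hge
        _ = (1/4:ℝ)^n * (1/(((m+2:ℕ)):ℝ)^2) := by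
            rw [div_pow, one_pow]; field_simp
    have hbsum : Summable (fun m : ℕ => (1/4:ℝ)^n * (1/(((m+2:ℕ)):ℝ)^2)) := hS.mul_left _
    have htailsum : Summable (fun m : ℕ => ‖1/(((m+2:ℕ)):ℝ)^(e n) * ph (m+2)‖) :=
      Summable.of_nonneg_of_le (fun m => norm_nonneg _) hbound hbsum
    have hdecomp := (Summable.sum_add_tsum_nat_add 2 (hsum n)).symm
    have h0 : (1:ℝ)/((0:ℕ):ℝ)^(e n) * ph 0 = 0 := by
      simp [zero_pow (by have := he n; omega : e n ≠ 0)]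
    have hr : ∑ i ∈ Finset.range 2, 1/((i:ℕ):ℝ)^(e n) * ph i = ph 1 := by
      rw [Finset.sum_range_succ, Finset.sum_range_one]
      simp [zero_pow (show e n ≠ 0 by have := he n; omega)]
    have : (∑' m : ℕ, 1/(m:ℝ)^(e n) * ph m) - ph 1 =
        ∑' m : ℕ, 1/(((m+2:ℕ)):ℝ)^(e n) * ph (m+2) := by
      rw [hdecomp, hr]; ring
    rw [this]
    calc |∑' m : ℕ, 1/(((m+2:ℕ)):ℝ)^(e n) * ph (m+2)|
        ≤ ∑' m : ℕ, ‖1/(((m+2:ℕ)):ℝ)^(e n) * ph (m+2)‖ := norm_tsum_le_tsum_norm htailsum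
      _ ≤ ∑' m : ℕ, (1/4:ℝ)^n * (1/(((m+2:ℕ)):ℝ)^2) := Summable.tsum_le_tsum hbound htailsum hbsum
      _ = (1/4:ℝ)^n * S := by rw [tsum_mul_left]
  have hzero : Tendsto (fun n => (∑' m : ℕ, 1/(m:ℝ)^(e n) * ph m) - ph 1) atTop (nhds 0) := by
    apply squeeze_zero_norm key
    rw [show (0:ℝ) = 0 * S by ring]
    exact (tendsto_pow_atTop_nhds_zero_of_lt_one (by norm_num) (by norm_num)).mul_const S
  have := hzero.add_const (ph 1)
  simpa using this

theorem stmt5 (t : ℝ) (ht : t ∈ Ioo (0:ℝ) 1) (ht2 : t ≠ 1/2) :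
    Tendsto (fun n : ℕ => (2*n+1 : ℝ) * B (2*n) t / B (2*n+1) t) atTop
      (nhds (2 * π * (Real.cos (2*π*t) / Real.sin (2*π*t)))) := by
  obtain ⟨ht0, ht1⟩ := ht
  have htIcc : t ∈ Icc (0:ℝ) 1 := ⟨le_of_lt ht0, le_of_lt ht1⟩
  have hπ : (0:ℝ) < π := Real.pi_pos
  -- sin (2πt) ≠ 0
  have hsin : Real.sin (2*π*t) ≠ 0 := by
    intro h
    rw [Real.sin_eq_zero_iff] at h
    obtain ⟨n, hn⟩ := h
    have hn2 : (n:ℝ) = 2*t := mul_right_cancel₀ hπ.ne' (by rw [hn]; ring)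
    have h1 : (0:ℝ) < (n:ℝ) := by rw [hn2]; linarith
    have h2 : (n:ℝ) < 2 := by rw [hn2]; linarith
    have h1' : (0:ℤ) < n := by exact_mod_cast h1
    have h2' : n < 2 := by exact_mod_cast h2
    have hn1 : n = 1 := by omega
    subst hn1
    apply ht2
    push_cast at hn2
    linarith
  -- Fourier series values
  set c : ℕ → ℝ := fun n => ∑' m : ℕ, 1/(m:ℝ)^(2*n) * Real.cos (2*π*m*t) with hc
  set s : ℕ → ℝ := fun n => ∑' m : ℕ, 1/(m:ℝ)^(2*n+1) * Real.sin (2*π*m*t) with hs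
  have hBmap : ∀ k : ℕ, (Polynomial.map (algebraMap ℚ ℝ) (Polynomial.bernoulli k)).eval t
      = B k t := by
    intro k
    rw [B, Polynomial.aeval_def, Polynomial.eval_map]
  have hcos : ∀ n : ℕ, n ≠ 0 →
      c n = (-1:ℝ)^(n+1) * (2*π)^(2*n) / 2 / (2*n)! * B (2*n) t := by
    intro n hn
    rw [hc, ← hBmap]
    exact (hasSum_one_div_nat_pow_mul_cos hn htIcc).tsum_eq
  have hsinf : ∀ n : ℕ, n ≠ 0 →
      s n = (-1:ℝ)^(n+1) * (2*π)^(2*n+1) / 2 / (2*n+1)! * B (2*n+1) t := by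
    intro n hn
    rw [hs, ← hBmap]
    exact (hasSum_one_div_nat_pow_mul_sin hn htIcc).tsum_eq
  -- limits of c and s
  have hphc : ∀ m : ℕ, |Real.cos (2*π*m*t)| ≤ 1 := fun m => Real.abs_cos_le_one _
  have hphs : ∀ m : ℕ, |Real.sin (2*π*m*t)| ≤ 1 := fun m => Real.abs_sin_le_one _
  have hclim : Tendsto c atTop (nhds (Real.cos (2*π*t))) := by
    rw [← tendsto_add_atTop_iff_nat 1]
    have := tendsto_tsum_pow (fun m => Real.cos (2*π*m*t)) hphc (fun n => 2*(n+1))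
      (fun n => by show 2*n+2 ≤ 2*(n+1); omega)
    simp only [hc]
    simpa using this
  have hslim : Tendsto s atTop (nhds (Real.sin (2*π*t))) := by
    rw [← tendsto_add_atTop_iff_nat 1]
    have := tendsto_tsum_pow (fun m => Real.sin (2*π*m*t)) hphs (fun n => 2*(n+1)+1)
      (fun n => by show 2*n+2 ≤ 2*(n+1)+1; omega)
    simp only [hs]
    simpa using this
  have hmain : Tendsto (fun n : ℕ => 2 * π * (c n / s n)) atTop
      (nhds (2 * π * (Real.cos (2*π*t) / Real.sin (2*π*t)))) :=
    ((hclim.div hslim hsin).const_mul (2*π))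
  apply hmain.congr'
  filter_upwards [eventually_ge_atTop 1] with n hn
  have hn0 : n ≠ 0 := by omega
  rw [hcos n hn0, hsinf n hn0]
  have hA : ((-1:ℝ)^(n+1) * (2*π)^(2*n) / 2 / (2*n)!) ≠ 0 := by
    have : ((2*n)! : ℝ) ≠ 0 := by exact_mod_cast (Nat.factorial_pos (2*n)).ne'
    positivity
  have hfact : ((2*n+1)! : ℝ) = (2*n+1) * (2*n)! := by
    rw [show (2*n+1)! = (2*n+1) * (2*n)! from Nat.factorial_succ (2*n)]
    push_cast
    ring
  have hA' : ((-1:ℝ)^(n+1) * (2*π)^(2*n+1) / 2 / (2*n+1)!)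
      = ((-1:ℝ)^(n+1) * (2*π)^(2*n) / 2 / (2*n)!) * (2*π / (2*n+1)) := by
    rw [hfact, pow_succ]
    have h1 : ((2*n)! : ℝ) ≠ 0 := by exact_mod_cast (Nat.factorial_pos (2*n)).ne'
    have h2 : (2*(n:ℝ)+1) ≠ 0 := by positivity
    field_simp
    ring
  rw [hA']
  set A := ((-1:ℝ)^(n+1) * (2*π)^(2*n) / 2 / (2*n)!) with hAdef
  rw [show A * (2*π/(2*(n:ℝ)+1)) * B (2*n+1) t = A * ((2*π/(2*(n:ℝ)+1)) * B (2*n+1) t) by ring]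
  rw [mul_div_mul_left _ _ hA]
  have h2n1 : (2*(n:ℝ)+1) ≠ 0 := by positivity
  have hπ' : (2*π) ≠ 0 := by positivity
  rcases eq_or_ne (B (2*n+1) t) 0 with hb | hb
  · simp [hb]
  · field_simp
end

section
/- For every nonnegative integer n, the function t \mapsto \ln |B_{2n+1}(t)| is concave on the interval (0, 1/2), i.e., |B_{2n+1}(t)| is logarithmically concave on (0,1/2). -/
open Set Real Filter

lemma hasDerivAt_B (m : ℕ) (t : ℝ) :
    HasDerivAt (fun t => B m t) ((m : ℝ) * B (m - 1) t) t := by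
  have h := (Polynomial.bernoulli m).hasDerivAt_aeval (R := ℚ) t
  rw [Polynomial.derivative_bernoulli] at h
  simpa [B, mul_comm] using h

lemma B_one (t : ℝ) : B 1 t = t - 1/2 := by
  simp [B, Polynomial.bernoulli, Finset.sum_range_succ, bernoulli_one]
  ring

lemma B_rat (m : ℕ) (q : ℚ) : B m (q : ℝ) = ((Polynomial.bernoulli m).eval q : ℚ) := by
  have : ((q : ℝ)) = algebraMap ℚ ℝ q := rfl
  rw [B, this, Polynomial.aeval_algebraMap_apply_eq_algebraMap_eval]
  rfl

lemma bernoulli_symm (m : ℕ) :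
    (Polynomial.bernoulli m).comp (1 - Polynomial.X) = (-1) ^ m * Polynomial.bernoulli m := by
  induction m with
  | zero => simp
  | succ k ih =>
    set p := (Polynomial.bernoulli (k+1)).comp (1 - Polynomial.X)
    set q := ((-1 : Polynomial ℚ)) ^ (k+1) * Polynomial.bernoulli (k+1)
    have hd : Polynomial.derivative (p - q) = 0 := by
      rw [map_sub]
      have h1 : Polynomial.derivative p =
          -(((k : Polynomial ℚ) + 1) * ((Polynomial.bernoulli k).comp (1 - Polynomial.X))) := by
        rw [Polynomial.derivative_comp_one_sub_X, Polynomial.derivative_bernoulli_add_one]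
        simp [mul_comm, mul_assoc, mul_left_comm]
      have hC : ((-1 : Polynomial ℚ)) ^ (k+1) = Polynomial.C ((-1:ℚ)^(k+1)) := by
        rw [map_pow, map_neg, map_one]
      have h2 : Polynomial.derivative q =
          (-1 : Polynomial ℚ) ^ (k+1) * (((k : Polynomial ℚ) + 1) * Polynomial.bernoulli k) := by
        show Polynomial.derivative ((-1 : Polynomial ℚ) ^ (k+1) * Polynomial.bernoulli (k+1)) = _
        rw [hC, Polynomial.derivative_C_mul, Polynomial.derivative_bernoulli_add_one, ← hC]

      rw [h1, h2, ih, pow_succ]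
      ring
    have hc := Polynomial.eq_C_of_derivative_eq_zero hd
    have he : (p - q).eval 0 = 0 := by
      have hq : q.eval 0 = (-1:ℚ)^(k+1) * bernoulli (k+1) := by simp [q]
      have hp : p.eval 0 = bernoulli' (k+1) := by
        simp [p, Polynomial.eval_comp]
      rw [Polynomial.eval_sub, hp, hq]
      rcases eq_or_ne (k+1) 1 with h | h
      · norm_num [h, bernoulli_one, bernoulli'_one]
      · rw [bernoulli_eq_bernoulli'_of_ne_one h]
        rcases Nat.even_or_odd (k+1) with hev | ho
        · rw [hev.neg_one_pow]; ring
        · rw [bernoulli'_eq_zero_of_odd ho (by omega)]; ring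
    have h0 : (p - q).coeff 0 = 0 := by
      have h2 := congrArg (Polynomial.eval 0) hc
      rw [he, Polynomial.eval_C] at h2
      exact h2.symm
    have hpq : p - q = 0 := by rw [hc, h0, map_zero]
    exact sub_eq_zero.mp hpq

lemma B_continuous (m : ℕ) : Continuous (B m) :=
  continuous_iff_continuousAt.2 fun t => (hasDerivAt_B m t).continuousAt

lemma B_zero_eq (m : ℕ) : B m 0 = ((bernoulli m : ℚ) : ℝ) := by
  have h := B_rat m 0
  simpa using h

lemma bernoulli_odd (m : ℕ) (ho : Odd m) (h1 : m ≠ 1) : bernoulli m = 0 := by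
  rw [bernoulli_eq_bernoulli'_of_ne_one h1]
  exact bernoulli'_eq_zero_of_odd ho (by rcases ho with ⟨j, rfl⟩; omega)

lemma B_half (m : ℕ) (ho : Odd m) : B m (1/2 : ℝ) = 0 := by
  have h2 : (Polynomial.bernoulli m).eval (1/2 : ℚ) = 0 := by
    have h := congrArg (Polynomial.eval (1/2 : ℚ)) (bernoulli_symm m)
    rw [Polynomial.eval_comp] at h
    simp only [Polynomial.eval_sub, Polynomial.eval_one, Polynomial.eval_X,
      Polynomial.eval_mul, Polynomial.eval_pow, Polynomial.eval_neg,
      ho.neg_one_pow] at h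
    norm_num at h
    linarith
  have h3 := B_rat m (1/2)
  rw [h2] at h3
  norm_num at h3
  exact h3

lemma B_sign (n : ℕ) : ∀ t ∈ Ioo (0:ℝ) (1/2), 0 < (-1:ℝ)^(n+1) * B (2*n+1) t := by
  induction n with
  | zero =>
    intro t ht
    simp only [Nat.zero_eq, zero_add, pow_one, Nat.mul_zero, B_one]
    have := ht.2
    norm_num at this ⊢
    linarith
  | succ k ih =>
    intro t ht
    set g : ℝ → ℝ := fun t => (-1:ℝ)^(k+2) * B (2*k+3) t with hg
    have hg' : ∀ x : ℝ, HasDerivAt g ((-1:ℝ)^(k+2) * (((2*k+3 : ℕ) : ℝ) * B (2*k+2) x)) x :=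
      fun x => (hasDerivAt_B (2*k+3) x).const_mul _
    have hgd : deriv g = fun x => (-1:ℝ)^(k+2) * (((2*k+3 : ℕ) : ℝ) * B (2*k+2) x) :=
      funext fun x => (hg' x).deriv
    have hsc : StrictConcaveOn ℝ (Icc (0:ℝ) (1/2)) g := by
      apply strictConcaveOn_of_deriv2_neg (convex_Icc _ _)
        ((continuous_const.mul (B_continuous (2*k+3))).continuousOn)
      intro x hx
      rw [interior_Icc] at hx
      have h2 : deriv (deriv g) x
          = (-1:ℝ)^(k+2) * (((2*k+3 : ℕ) : ℝ) * (((2*k+2 : ℕ) : ℝ) * B (2*k+1) x)) := by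
        rw [hgd]
        exact (((hasDerivAt_B (2*k+2) x).const_mul ((2*k+3 : ℕ) : ℝ)).const_mul
          ((-1:ℝ)^(k+2))).deriv
      have hterm := ih x hx
      have hsgn : (-1:ℝ)^(k+2) = -(-1:ℝ)^(k+1) := by rw [pow_succ]; ring
      show deriv^[2] g x < 0
      rw [Function.iterate_succ, Function.iterate_one, Function.comp_apply, h2, hsgn]
      have hc1 : (0:ℝ) < ((2*k+3 : ℕ) : ℝ) := by positivity
      have hc2 : (0:ℝ) < ((2*k+2 : ℕ) : ℝ) := by positivity
      nlinarith [hterm, mul_pos hc1 hc2]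
    have hg0 : g 0 = 0 := by
      rw [hg]
      simp only [B_zero_eq, bernoulli_odd (2*k+3) ⟨k+1, by omega⟩ (by omega)]
      norm_num
    have ghalf : g (1/2) = 0 := by
      rw [hg]
      simp only [B_half (2*k+3) ⟨k+1, by omega⟩]
      norm_num
    obtain ⟨h0, h1⟩ := ht
    have key := hsc.2 (show (0:ℝ) ∈ Icc (0:ℝ) (1/2) by norm_num)
      (show (1/2:ℝ) ∈ Icc (0:ℝ) (1/2) by norm_num)
      (show (0:ℝ) ≠ 1/2 by norm_num)
      (show (0:ℝ) < 1 - 2*t by linarith) (show (0:ℝ) < 2*t by linarith)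
      (show (1 - 2*t) + 2*t = 1 by ring)
    rw [hg0, ghalf] at key
    simp only [smul_eq_mul, mul_zero, zero_add, mul_one] at key
    have ht' : 2*t * (1/2) = t := by ring
    rw [ht'] at key
    have e : 2*(k+1)+1 = 2*k+3 := by omega
    rw [e]
    simpa using key

theorem stmt6 (n : ℕ) :
    ConcaveOn ℝ (Ioo (0:ℝ) (1/2)) (fun t : ℝ => Real.log |B (2*n+1) t|) := by
  have hfe : (fun t : ℝ => Real.log |B (2*n+1) t|) = fun t => Real.log (B (2*n+1) t) :=
    funext fun t => Real.log_abs _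
  rw [hfe]
  have hne : ∀ x ∈ Ioo (0:ℝ) (1/2), B (2*n+1) x ≠ 0 := by
    intro x hx h
    have hs := B_sign n x hx
    rw [h, mul_zero] at hs
    exact lt_irrefl _ hs
  set u : ℝ → ℝ := fun t => ((2*n+1 : ℕ) : ℝ) * B (2*n) t with hu
  have hud : ∀ x : ℝ, HasDerivAt u (((2*n+1:ℕ):ℝ) * (((2*n:ℕ):ℝ) * B (2*n-1) x)) x :=
    fun x => (hasDerivAt_B (2*n) x).const_mul _
  refine concaveOn_of_hasDerivWithinAt2_nonpos (convex_Ioo _ _)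
    (f' := fun x => u x / B (2*n+1) x)
    (f'' := fun x => (((2*n+1:ℕ):ℝ) * (((2*n:ℕ):ℝ) * B (2*n-1) x) * B (2*n+1) x
      - u x * u x) / (B (2*n+1) x)^2) ?_ ?_ ?_ ?_
  · intro x hx
    exact (((hasDerivAt_B (2*n+1) x).log (hne x hx))).continuousAt.continuousWithinAt
  · intro x hx
    rw [isOpen_Ioo.interior_eq] at hx
    exact (((hasDerivAt_B (2*n+1) x).log (hne x hx))).hasDerivWithinAt
  · intro x hx
    rw [isOpen_Ioo.interior_eq] at hx
    exact ((hud x).div (hasDerivAt_B (2*n+1) x) (hne x hx)).hasDerivWithinAt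
  · intro x hx
    rw [isOpen_Ioo.interior_eq] at hx
    have hsqpos : 0 < (B (2*n+1) x)^2 := by
      have := hne x hx
      positivity
    have h2 : ((2*n+1:ℕ):ℝ) * (((2*n:ℕ):ℝ) * B (2*n-1) x) * B (2*n+1) x ≤ 0 := by
      rcases Nat.eq_zero_or_pos n with rfl | hn
      · norm_num
      · obtain ⟨j, rfl⟩ : ∃ j, n = j+1 := ⟨n-1, by omega⟩
        have e : 2*(j+1)-1 = 2*j+1 := by omega
        rw [e]
        have ha := B_sign j x hx
        have hb := B_sign (j+1) x hx
        have hs : ((-1:ℝ)^(j+1)) * ((-1:ℝ)^(j+1+1)) = -1 := by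
          rw [← pow_add]
          exact Odd.neg_one_pow ⟨j+1, by ring⟩
        have hprod : B (2*j+1) x * B (2*(j+1)+1) x < 0 := by
          have h := mul_pos ha hb
          nlinarith [h, hs]
        have hc1 : (0:ℝ) < ((2*(j+1)+1:ℕ):ℝ) := by positivity
        have hc2 : (0:ℝ) < ((2*(j+1):ℕ):ℝ) := by positivity
        nlinarith [hprod, mul_pos hc1 hc2]
    have h3 : 0 ≤ u x * u x := mul_self_nonneg _
    exact div_nonpos_of_nonpos_of_nonneg (by linarith) (le_of_lt hsqpos)
end

section
/- For every fixed real t in (0,1) with t \ne 1/2, the limit as n \to \infty of B_{2n}(t)/(n B_{2n-1}(t)) equals -\cot(2\pi t)/\pi. -/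
open Set Real Filter

noncomputable def Sc (t : ℝ) (k : ℕ) : ℝ :=
  (-1 : ℝ) ^ (k + 1) * (2 * π) ^ (2 * k) / 2 / ((2 * k).factorial : ℝ) * B (2 * k) t

noncomputable def Ss (t : ℝ) (k : ℕ) : ℝ :=
  (-1 : ℝ) ^ (k + 1) * (2 * π) ^ (2 * k + 1) / 2 / (((2 * k + 1).factorial : ℝ)) * B (2 * k + 1) t

lemma aeval_eq_eval_map (p : Polynomial ℚ) (t : ℝ) :
    (Polynomial.map (algebraMap ℚ ℝ) p).eval t = Polynomial.aeval t p := by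
  rw [Polynomial.eval_map, Polynomial.aeval_def]

lemma summable_shift2 : Summable (fun m : ℕ => 1 / ((m : ℝ) + 2) ^ 2) := by
  have h : Summable (fun n : ℕ => 1 / (n : ℝ) ^ 2) :=
    Real.summable_one_div_nat_pow.mpr one_lt_two
  have h2 := (summable_nat_add_iff 2).mpr h
  refine h2.congr fun m => ?_
  push_cast
  ring_nf

lemma abs_hasSum_tail (e j : ℕ) (he : 2 * j + 2 ≤ e) (c : ℕ → ℝ) (hc : ∀ m, |c m| ≤ 1)
    (s : ℝ) (h : HasSum (fun m : ℕ => 1 / ((m : ℝ) + 2) ^ e * c m) s) :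
    |s| ≤ (∑' m : ℕ, 1 / ((m : ℝ) + 2) ^ 2) * (1 / 4) ^ j := by
  have hbound : ∀ m : ℕ, |1 / ((m : ℝ) + 2) ^ e * c m| ≤ (1 / 4) ^ j * (1 / ((m : ℝ) + 2) ^ 2) := by
    intro m
    have hm2 : (2 : ℝ) ≤ (m : ℝ) + 2 := by
      have : (0 : ℝ) ≤ (m : ℝ) := Nat.cast_nonneg m
      linarith
    have hm0 : (0 : ℝ) < (m : ℝ) + 2 := by linarith
    have key : (4 : ℝ) ^ j * ((m : ℝ) + 2) ^ 2 ≤ ((m : ℝ) + 2) ^ e := by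
      calc (4 : ℝ) ^ j * ((m : ℝ) + 2) ^ 2
          = (2 ^ 2 : ℝ) ^ j * ((m : ℝ) + 2) ^ 2 := by norm_num
        _ ≤ (((m : ℝ) + 2) ^ 2) ^ j * ((m : ℝ) + 2) ^ 2 :=
            mul_le_mul_of_nonneg_right
              (pow_le_pow_left₀ (by norm_num) (pow_le_pow_left₀ (by norm_num) hm2 2) j)
              (by positivity)
        _ = ((m : ℝ) + 2) ^ (2 * j + 2) := by rw [← pow_mul, ← pow_add]
        _ ≤ ((m : ℝ) + 2) ^ e := pow_le_pow_right₀ (by linarith) he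
    rw [abs_mul]
    have h1 : |1 / ((m : ℝ) + 2) ^ e| = 1 / ((m : ℝ) + 2) ^ e := by
      rw [abs_of_nonneg]; positivity
    rw [h1]
    calc 1 / ((m : ℝ) + 2) ^ e * |c m| ≤ 1 / ((m : ℝ) + 2) ^ e * 1 := by
          gcongr; exact hc m
      _ = 1 / ((m : ℝ) + 2) ^ e := mul_one _
      _ ≤ (1 / 4) ^ j * (1 / ((m : ℝ) + 2) ^ 2) := by
          rw [div_pow, one_pow, div_mul_div_comm, one_mul,
            div_le_div_iff₀ (by positivity) (by positivity)]
          linarith [key]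
  have hsg : Summable (fun m : ℕ => (1 / 4 : ℝ) ^ j * (1 / ((m : ℝ) + 2) ^ 2)) :=
    summable_shift2.mul_left _
  have habs : Summable (fun m : ℕ => |1 / ((m : ℝ) + 2) ^ e * c m|) :=
    Summable.of_nonneg_of_le (fun m => abs_nonneg _) hbound hsg
  have habs' : Summable (fun m : ℕ => ‖1 / ((m : ℝ) + 2) ^ e * c m‖) := habs
  calc |s| = |∑' m : ℕ, 1 / ((m : ℝ) + 2) ^ e * c m| := by rw [h.tsum_eq]
    _ ≤ ∑' m : ℕ, |1 / ((m : ℝ) + 2) ^ e * c m| := by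
        exact norm_tsum_le_tsum_norm habs'
    _ ≤ ∑' m : ℕ, (1 / 4 : ℝ) ^ j * (1 / ((m : ℝ) + 2) ^ 2) := Summable.tsum_le_tsum hbound habs hsg
    _ = (1 / 4 : ℝ) ^ j * ∑' m : ℕ, 1 / ((m : ℝ) + 2) ^ 2 := tsum_mul_left
    _ = (∑' m : ℕ, 1 / ((m : ℝ) + 2) ^ 2) * (1 / 4) ^ j := mul_comm _ _

lemma hasSum_Sc (t : ℝ) (ht : t ∈ Icc (0 : ℝ) 1) (k : ℕ) (hk : k ≠ 0) :
    HasSum (fun n : ℕ => 1 / (n : ℝ) ^ (2 * k) * Real.cos (2 * π * n * t)) (Sc t k) := by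
  have h := hasSum_one_div_nat_pow_mul_cos hk ht
  unfold Sc B
  rwa [aeval_eq_eval_map] at h

lemma hasSum_Ss (t : ℝ) (ht : t ∈ Icc (0 : ℝ) 1) (k : ℕ) (hk : k ≠ 0) :
    HasSum (fun n : ℕ => 1 / (n : ℝ) ^ (2 * k + 1) * Real.sin (2 * π * n * t)) (Ss t k) := by
  have h := hasSum_one_div_nat_pow_mul_sin hk ht
  unfold Ss B
  rwa [aeval_eq_eval_map] at h

lemma tendsto_Sc (t : ℝ) (ht : t ∈ Icc (0 : ℝ) 1) :
    Tendsto (fun j : ℕ => Sc t (j + 1)) atTop (nhds (Real.cos (2 * π * t))) := by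
  rw [← tendsto_sub_nhds_zero_iff]
  apply squeeze_zero_norm (a := fun j : ℕ => (∑' m : ℕ, 1 / ((m : ℝ) + 2) ^ 2) * (1 / 4) ^ j)
  · intro j
    have h := hasSum_Sc t ht (j + 1) (Nat.succ_ne_zero j)
    have h2 := (hasSum_nat_add_iff' (f := fun n : ℕ =>
      1 / (n : ℝ) ^ (2 * (j + 1)) * Real.cos (2 * π * n * t)) 2).mpr h
    have hsum : ∑ i ∈ Finset.range 2,
        (1 / (i : ℝ) ^ (2 * (j + 1)) * Real.cos (2 * π * i * t)) = Real.cos (2 * π * t) := by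
      rw [Finset.sum_range_succ, Finset.sum_range_one]
      norm_num [zero_pow (by omega : 2 * (j + 1) ≠ 0)]
    rw [hsum] at h2
    have h3 : HasSum (fun m : ℕ => 1 / ((m : ℝ) + 2) ^ (2 * (j + 1)) *
        Real.cos (2 * π * ((m : ℝ) + 2) * t)) (Sc t (j + 1) - Real.cos (2 * π * t)) := by
      refine h2.congr_fun fun m => ?_
      push_cast
      ring_nf
    have h4 := abs_hasSum_tail (2 * (j + 1)) j (by omega)
      (fun m => Real.cos (2 * π * ((m : ℝ) + 2) * t)) (fun m => Real.abs_cos_le_one _) _ h3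
    simpa [Real.norm_eq_abs] using h4
  · have hT : Tendsto (fun j : ℕ => (∑' m : ℕ, 1 / ((m : ℝ) + 2) ^ 2) * (1 / 4 : ℝ) ^ j)
        atTop (nhds ((∑' m : ℕ, 1 / ((m : ℝ) + 2) ^ 2) * 0)) :=
      (tendsto_pow_atTop_nhds_zero_of_lt_one (by norm_num) (by norm_num)).const_mul _
    simpa using hT

lemma tendsto_Ss (t : ℝ) (ht : t ∈ Icc (0 : ℝ) 1) :
    Tendsto (fun j : ℕ => Ss t (j + 1)) atTop (nhds (Real.sin (2 * π * t))) := by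
  rw [← tendsto_sub_nhds_zero_iff]
  apply squeeze_zero_norm (a := fun j : ℕ => (∑' m : ℕ, 1 / ((m : ℝ) + 2) ^ 2) * (1 / 4) ^ j)
  · intro j
    have h := hasSum_Ss t ht (j + 1) (Nat.succ_ne_zero j)
    have h2 := (hasSum_nat_add_iff' (f := fun n : ℕ =>
      1 / (n : ℝ) ^ (2 * (j + 1) + 1) * Real.sin (2 * π * n * t)) 2).mpr h
    have hsum : ∑ i ∈ Finset.range 2,
        (1 / (i : ℝ) ^ (2 * (j + 1) + 1) * Real.sin (2 * π * i * t)) = Real.sin (2 * π * t) := by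
      rw [Finset.sum_range_succ, Finset.sum_range_one]
      norm_num [zero_pow (by omega : 2 * (j + 1) + 1 ≠ 0)]
    rw [hsum] at h2
    have h3 : HasSum (fun m : ℕ => 1 / ((m : ℝ) + 2) ^ (2 * (j + 1) + 1) *
        Real.sin (2 * π * ((m : ℝ) + 2) * t)) (Ss t (j + 1) - Real.sin (2 * π * t)) := by
      refine h2.congr_fun fun m => ?_
      push_cast
      ring_nf
    have h4 := abs_hasSum_tail (2 * (j + 1) + 1) j (by omega)
      (fun m => Real.sin (2 * π * ((m : ℝ) + 2) * t)) (fun m => Real.abs_sin_le_one _) _ h3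
    simpa [Real.norm_eq_abs] using h4
  · have hT : Tendsto (fun j : ℕ => (∑' m : ℕ, 1 / ((m : ℝ) + 2) ^ 2) * (1 / 4 : ℝ) ^ j)
        atTop (nhds ((∑' m : ℕ, 1 / ((m : ℝ) + 2) ^ 2) * 0)) :=
      (tendsto_pow_atTop_nhds_zero_of_lt_one (by norm_num) (by norm_num)).const_mul _
    simpa using hT

lemma sin_ne_zero_of_mem (t : ℝ) (ht : t ∈ Ioo (0 : ℝ) 1) (ht2 : t ≠ 1/2) :
    Real.sin (2 * π * t) ≠ 0 := by
  rw [Real.sin_ne_zero_iff]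
  intro n hn
  have hπ : (0 : ℝ) < π := Real.pi_pos
  have htn : (n : ℝ) = 2 * t := by
    have := mul_right_cancel₀ (ne_of_gt hπ) (by linarith [hn] : (n : ℝ) * π = (2 * t) * π)
    exact this
  rcases ht with ⟨h0, h1⟩
  have hn0 : (0 : ℝ) < (n : ℝ) := by rw [htn]; linarith
  have hn2 : (n : ℝ) < 2 := by rw [htn]; linarith
  have hne1 : (n : ℝ) ≠ 1 := by
    intro h
    apply ht2
    rw [h] at htn
    linarith
  have h0' : (0 : ℤ) < n := by exact_mod_cast hn0
  have h2' : n < 2 := by exact_mod_cast hn2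
  have : n = 1 := by omega
  rw [this] at hne1
  norm_num at hne1

theorem stmt8 (t : ℝ) (ht : t ∈ Ioo (0:ℝ) 1) (ht2 : t ≠ 1/2) :
    Tendsto (fun n : ℕ => B (2*n) t / ((n : ℝ) * B (2*n-1) t)) atTop
      (nhds (-(Real.cos (2*π*t) / Real.sin (2*π*t)) / π)) := by
  have htI : t ∈ Icc (0 : ℝ) 1 := ⟨ht.1.le, ht.2.le⟩
  have hπ : (0 : ℝ) < π := Real.pi_pos
  have hsin : Real.sin (2 * π * t) ≠ 0 := sin_ne_zero_of_mem t ht ht2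
  rw [← tendsto_add_atTop_iff_nat 2]
  have key : ∀ m : ℕ, B (2 * (m + 2)) t / (((m + 2 : ℕ) : ℝ) * B (2 * (m + 2) - 1) t)
      = -(Sc t (m + 2) / (π * Ss t (m + 1))) := by
    intro m
    have h2 : 2 * (m + 2) - 1 = 2 * (m + 1) + 1 := by omega
    rw [h2]
    rcases eq_or_ne (B (2 * (m + 1) + 1) t) 0 with hb0 | hb0
    · rw [hb0, mul_zero, div_zero]
      have hss : Ss t (m + 1) = 0 := by rw [Ss, hb0, mul_zero]
      rw [hss, mul_zero, div_zero, neg_zero]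
    · unfold Sc Ss
      have hfac : (2 * (m + 2)).factorial = (2 * (m + 2)) * (2 * (m + 1) + 1).factorial := by
        rw [show 2 * (m + 2) = (2 * (m + 1) + 1) + 1 from by omega, Nat.factorial_succ]
      rw [hfac]
      have hpow : ((2 : ℝ) * π) ^ (2 * (m + 2)) = (2 * π) ^ (2 * (m + 1) + 1) * (2 * π) := by
        rw [show 2 * (m + 2) = (2 * (m + 1) + 1) + 1 from by omega, pow_succ]
      rw [hpow]
      have hneg : ((-1 : ℝ)) ^ (m + 2 + 1) = -((-1 : ℝ)) ^ (m + 1 + 1) := by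
        rw [pow_succ]; ring
      rw [hneg]
      have hfacne : (((2 * (m + 1) + 1).factorial : ℝ)) ≠ 0 := by
        exact_mod_cast Nat.factorial_ne_zero _
      have hpowne : ((2 : ℝ) * π) ^ (2 * (m + 1) + 1) ≠ 0 := by positivity
      have hnegne : ((-1 : ℝ)) ^ (m + 1 + 1) ≠ 0 := by
        apply pow_ne_zero; norm_num
      have hm2 : ((m + 2 : ℕ) : ℝ) ≠ 0 := by positivity
      push_cast
      field_simp
  simp only [key]
  have hlim : -(Real.cos (2*π*t) / Real.sin (2*π*t)) / π
      = -(Real.cos (2*π*t) / (π * Real.sin (2*π*t))) := by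
    rw [neg_div, div_div, mul_comm (Real.sin (2*π*t)) π]
  rw [hlim]
  apply Tendsto.neg
  apply Tendsto.div
  · exact (tendsto_Sc t htI).comp (tendsto_add_atTop_nat 1)
  · exact ((tendsto_Ss t htI).const_mul π)
  · exact mul_ne_zero (ne_of_gt hπ) hsin
end

section
/- For every integer n \ge 2 and every real t with 0 < t < 1/2, one has |B_{2n+1}(t)| < (\sqrt{3}/9)(1 - 2^{1-2n})(2n+1)|B_{2n}|. -/
/-!
On `[0, 1]` the odd Bernoulli polynomial has the Fourier expansion
`B_{2k+1}(t) = (-1)^{k+1} 2 (2k+1)! / (2π)^{2k+1} · ∑ sin(2πmt) / m^{2k+1}`, so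
`|B_{2k+1}(t)| ≤ 2 (2k+1)! ζ(2k+1) / (2π)^{2k+1}`. Euler's formula
`ζ(2k) = 2^{2k-1} π^{2k} |B_{2k}| / (2k)!` and `ζ(2k+1) ≤ ζ(2k)` turn this into
`|B_{2k+1}(t)| ≤ (2k+1) |B_{2k}| / (2π)`, and `1/(2π) ≈ 0.159` is below
`(√3/9)(1 - 2^{1-2n}) ≥ (√3/9)(7/8) ≈ 0.168` for `n ≥ 2`.
-/

open Set Real Filter

open scoped Nat

lemma tsum_one_div_nat_pow_pos {p : ℕ} (hp : 1 < p) : 0 < ∑' m : ℕ, 1 / (m : ℝ) ^ p :=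
  (Real.summable_one_div_nat_pow.2 hp).tsum_pos (fun _ ↦ by positivity) 1 (by norm_num)

lemma tsum_one_div_nat_pow_le_of_le {p q : ℕ} (hp : 1 < p) (hpq : p ≤ q) :
    ∑' m : ℕ, 1 / (m : ℝ) ^ q ≤ ∑' m : ℕ, 1 / (m : ℝ) ^ p := by
  refine Summable.tsum_le_tsum (fun m ↦ ?_) (Real.summable_one_div_nat_pow.2 (by omega))
    (Real.summable_one_div_nat_pow.2 hp)
  rcases m.eq_zero_or_pos with rfl | hm
  · simp [zero_pow (by omega : q ≠ 0), zero_pow (by omega : p ≠ 0)]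
  · exact one_div_pow_le_one_div_pow_of_le (by exact_mod_cast hm) hpq

lemma tsum_one_div_nat_pow_two_mul_eq {k : ℕ} (hk : k ≠ 0) :
    ∑' m : ℕ, 1 / (m : ℝ) ^ (2 * k)
      = 2 ^ (2 * k - 1) * π ^ (2 * k) / (2 * k)! * |Bnum (2 * k)| := by
  have hpos := tsum_one_div_nat_pow_pos (p := 2 * k) (by omega)
  rw [← abs_of_pos hpos, (hasSum_zeta_nat hk).tsum_eq, Bnum]
  simp only [abs_mul, abs_div, abs_pow, abs_neg, abs_one, one_pow, one_mul, abs_two,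
    abs_of_pos pi_pos, Nat.abs_cast]
  ring

lemma abs_B_odd_le_tsum {k : ℕ} (hk : k ≠ 0) {t : ℝ} (ht : t ∈ Icc (0 : ℝ) 1) :
    (2 * π) ^ (2 * k + 1) / 2 / (2 * k + 1)! * |B (2 * k + 1) t|
      ≤ ∑' m : ℕ, 1 / (m : ℝ) ^ (2 * k + 1) := by
  have hsin := hasSum_one_div_nat_pow_mul_sin hk ht
  rw [Polynomial.eval_map, ← Polynomial.aeval_def, ← B] at hsin
  have hterm (m : ℕ) :
      ‖1 / (m : ℝ) ^ (2 * k + 1) * sin (2 * π * m * t)‖ ≤ 1 / (m : ℝ) ^ (2 * k + 1) := by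
    rw [Real.norm_eq_abs, abs_mul, abs_of_nonneg (by positivity)]
    exact mul_le_of_le_one_right (by positivity) (abs_sin_le_one _)
  have hbound :=
    tsum_of_norm_bounded (Real.summable_one_div_nat_pow.2 (by omega)).hasSum hterm
  rw [hsin.tsum_eq, Real.norm_eq_abs] at hbound
  simpa only [abs_mul, abs_div, abs_pow, abs_neg, abs_one, one_pow, one_mul, abs_two,
    abs_of_pos pi_pos, Nat.abs_cast] using hbound

lemma abs_B_odd_le {k : ℕ} (hk : k ≠ 0) {t : ℝ} (ht : t ∈ Icc (0 : ℝ) 1) :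
    |B (2 * k + 1) t| ≤ (2 * k + 1) * |Bnum (2 * k)| / (2 * π) := by
  have hzeta := tsum_one_div_nat_pow_le_of_le (p := 2 * k) (q := 2 * k + 1) (by omega) (by omega)
  rw [tsum_one_div_nat_pow_two_mul_eq hk] at hzeta
  have hB := (abs_B_odd_le_tsum hk ht).trans hzeta
  have hscale : (2 * π) ^ (2 * k + 1) / 2 / ((2 * k + 1)! : ℝ)
      = 2 ^ (2 * k - 1) * π ^ (2 * k) / (2 * k)! * (2 * π / (2 * k + 1)) := by
    have h2 : (2 : ℝ) ^ (2 * k) = 2 * 2 ^ (2 * k - 1) := by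
      rw [← pow_succ', Nat.sub_add_cancel (by omega)]
    rw [Nat.factorial_succ, mul_pow, pow_succ, pow_succ π, h2]
    push_cast
    field_simp
  rw [hscale, mul_assoc, mul_le_mul_iff_right₀ (by positivity), div_mul_eq_mul_div,
    div_le_iff₀ (by positivity)] at hB
  rw [le_div_iff₀ (by positivity)]
  linarith

lemma Bnum_two_mul_ne_zero {k : ℕ} (hk : k ≠ 0) : Bnum (2 * k) ≠ 0 := by
  intro h
  have hpos := tsum_one_div_nat_pow_pos (p := 2 * k) (by omega)
  rw [tsum_one_div_nat_pow_two_mul_eq hk, h, abs_zero, mul_zero] at hpos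
  exact hpos.false

lemma one_div_two_pi_lt {n : ℕ} (hn : 2 ≤ n) :
    1 / (2 * π) < √3 / 9 * (1 - 1 / (2 : ℝ) ^ (2 * n - 1)) := by
  have hpow : 1 / (2 : ℝ) ^ (2 * n - 1) ≤ 1 / 2 ^ 3 :=
    one_div_pow_le_one_div_pow_of_le one_le_two (by omega)
  have hsqrt : (1.7 : ℝ) < √3 := by
    rw [Real.lt_sqrt (by norm_num)]
    norm_num
  have hpi := pi_gt_d2
  rw [div_lt_iff₀ (by positivity)]
  nlinarith [mul_lt_mul'' hsqrt hpi (by norm_num) (by norm_num)]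

theorem stmt10 (n : ℕ) (hn : 2 ≤ n) (t : ℝ) (ht : 0 < t) (ht2 : t < 1/2) :
    |B (2*n+1) t| < (Real.sqrt 3 / 9) * (1 - 1/(2:ℝ)^(2*n-1)) * (2*n+1 : ℝ) * |Bnum (2*n)| := by
  have hn0 : n ≠ 0 := by omega
  have hscale : 0 < (2 * n + 1 : ℝ) * |Bnum (2 * n)| :=
    mul_pos (by positivity) (abs_pos.2 (Bnum_two_mul_ne_zero hn0))
  calc |B (2 * n + 1) t| ≤ (2 * n + 1) * |Bnum (2 * n)| / (2 * π) :=
        abs_B_odd_le hn0 ⟨ht.le, by linarith⟩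
    _ = 1 / (2 * π) * ((2 * n + 1) * |Bnum (2 * n)|) := by ring
    _ < √3 / 9 * (1 - 1 / (2 : ℝ) ^ (2 * n - 1)) * ((2 * n + 1) * |Bnum (2 * n)|) :=
        mul_lt_mul_of_pos_right (one_div_two_pi_lt hn) hscale
    _ = _ := by ring
end

section
/- For every positive integer n, \sup_{t \in [0,1]} |B_{2n+1}(t)| < ((2n+1)/(2\pi)) |B_{2n}|, where B_{2n} is the 2n-th Bernoulli number. -/
open Set Real Filter

lemma summable_aux {k : ℕ} (hk : 2 ≤ k) : Summable (fun m : ℕ => 1 / (m:ℝ)^k) :=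
  Real.summable_one_div_nat_pow.mpr (by omega)

lemma zsum_nonneg (k : ℕ) (m : ℕ) : (0:ℝ) ≤ 1 / (m:ℝ)^k := by positivity

lemma zsum_pos {k : ℕ} (hk : 2 ≤ k) : (0:ℝ) < ∑' m : ℕ, 1 / (m:ℝ)^k := by
  refine Summable.tsum_pos (summable_aux hk) (zsum_nonneg k) 1 (by norm_num)

lemma zsum_lt {k : ℕ} (hk : 2 ≤ k) :
    (∑' m : ℕ, 1 / (m:ℝ)^(k+1)) < ∑' m : ℕ, 1 / (m:ℝ)^k := by
  refine Summable.tsum_lt_tsum (i := 2) (fun m => ?_) ?_ (summable_aux (by omega)) (summable_aux hk)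
  · rcases Nat.eq_zero_or_pos m with h | h
    · simp [h, zero_pow, (by omega : k ≠ 0), (by omega : k + 1 ≠ 0)]
    · apply one_div_le_one_div_of_le (by positivity)
      calc ((m:ℝ))^k = (m:ℝ)^k * 1 := by ring
        _ ≤ (m:ℝ)^k * m := by
            apply mul_le_mul_of_nonneg_left _ (by positivity)
            exact_mod_cast h
        _ = (m:ℝ)^(k+1) := by ring
  · apply one_div_lt_one_div_of_lt (by positivity)
    calc ((2:ℕ):ℝ)^k < ((2:ℕ):ℝ)^k * 2 := by
          have : (0:ℝ) < ((2:ℕ):ℝ)^k := by positivity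
          linarith
      _ = ((2:ℕ):ℝ)^(k+1) := by ring

lemma B_bound (n : ℕ) (hn : 1 ≤ n) {t : ℝ} (ht : t ∈ Icc (0:ℝ) 1) :
    |B (2*n+1) t| ≤ 2 * (2*n+1).factorial / (2*π)^(2*n+1) * ∑' m : ℕ, 1/(m:ℝ)^(2*n+1) := by
  have hs := hasSum_one_div_nat_pow_mul_sin (k := n) (by omega) ht
  have hB : B (2*n+1) t
      = Polynomial.eval t (Polynomial.map (algebraMap ℚ ℝ) (Polynomial.bernoulli (2*n+1))) := by
    rw [B, Polynomial.aeval_def, Polynomial.eval_map]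
  have hsum : (∑' m : ℕ, 1 / (m:ℝ)^(2*n+1) * Real.sin (2 * π * m * t))
      = (-1:ℝ) ^ (n + 1) * (2 * π) ^ (2*n+1) / 2 / (2*n+1).factorial * B (2*n+1) t := by
    rw [hB]; exact hs.tsum_eq
  have hπ : (0:ℝ) < π := Real.pi_pos
  have hfac : (0:ℝ) < ((2*n+1).factorial : ℝ) := by positivity
  have hc : (0:ℝ) < (2*π)^(2*n+1) / 2 / (2*n+1).factorial := by positivity
  have habs : ((2*π)^(2*n+1) / 2 / (2*n+1).factorial) * |B (2*n+1) t|
      ≤ ∑' m : ℕ, 1/(m:ℝ)^(2*n+1) := by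
    have h1 : ((2*π)^(2*n+1) / 2 / (2*n+1).factorial) * |B (2*n+1) t|
        = |∑' m : ℕ, 1 / (m:ℝ)^(2*n+1) * Real.sin (2 * π * m * t)| := by
      rw [hsum, abs_mul]
      congr 1
      rw [abs_div, abs_div, abs_mul, abs_pow, abs_neg, abs_one, one_pow, one_mul]
      rw [abs_of_nonneg (by positivity : (0:ℝ) ≤ (2*π)^(2*n+1)),
        abs_of_nonneg (by norm_num : (0:ℝ) ≤ (2:ℝ)),
        abs_of_nonneg (le_of_lt hfac)]
    rw [h1]
    calc |∑' m : ℕ, 1 / (m:ℝ)^(2*n+1) * Real.sin (2 * π * m * t)|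
        ≤ ∑' m : ℕ, |1 / (m:ℝ)^(2*n+1) * Real.sin (2 * π * m * t)| := by
          have := norm_tsum_le_tsum_norm (f := fun m : ℕ => 1 / (m:ℝ)^(2*n+1) * Real.sin (2 * π * m * t)) ?_
          · simpa only [Real.norm_eq_abs] using this
          · exact (summable_aux (k := 2*n+1) (by omega)).of_nonneg_of_le
              (fun m => norm_nonneg _)
              (fun m => by
                rw [Real.norm_eq_abs, abs_mul, abs_of_nonneg (zsum_nonneg (2*n+1) m)]
                calc (1/(m:ℝ)^(2*n+1)) * |Real.sin (2 * π * m * t)|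
                    ≤ (1/(m:ℝ)^(2*n+1)) * 1 :=
                      mul_le_mul_of_nonneg_left (Real.abs_sin_le_one _) (zsum_nonneg (2*n+1) m)
                  _ = 1/(m:ℝ)^(2*n+1) := by ring)
      _ ≤ ∑' m : ℕ, 1/(m:ℝ)^(2*n+1) := by
          apply Summable.tsum_le_tsum _ _ (summable_aux (by omega))
          · intro m
            rw [abs_mul, abs_of_nonneg (zsum_nonneg (2*n+1) m)]
            calc (1/(m:ℝ)^(2*n+1)) * |Real.sin (2 * π * m * t)|
                ≤ (1/(m:ℝ)^(2*n+1)) * 1 :=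
                  mul_le_mul_of_nonneg_left (Real.abs_sin_le_one _) (zsum_nonneg (2*n+1) m)
              _ = 1/(m:ℝ)^(2*n+1) := by ring
          · exact (summable_aux (k := 2*n+1) (by omega)).of_nonneg_of_le
              (fun m => abs_nonneg _)
              (fun m => by
                rw [abs_mul, abs_of_nonneg (zsum_nonneg (2*n+1) m)]
                calc (1/(m:ℝ)^(2*n+1)) * |Real.sin (2 * π * m * t)|
                    ≤ (1/(m:ℝ)^(2*n+1)) * 1 :=
                      mul_le_mul_of_nonneg_left (Real.abs_sin_le_one _) (zsum_nonneg (2*n+1) m)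
                  _ = 1/(m:ℝ)^(2*n+1) := by ring)
  calc |B (2*n+1) t| ≤ (∑' m : ℕ, 1/(m:ℝ)^(2*n+1)) / ((2*π)^(2*n+1) / 2 / (2*n+1).factorial) :=
        (le_div_iff₀' hc).mpr habs
    _ = 2 * (2*n+1).factorial / (2*π)^(2*n+1) * ∑' m : ℕ, 1/(m:ℝ)^(2*n+1) := by
        field_simp

lemma Bnum_eq (n : ℕ) (hn : 1 ≤ n) :
    (2*π)^(2*n) / (2 * (2*n).factorial) * |Bnum (2*n)| = ∑' m : ℕ, 1/(m:ℝ)^(2*n) := by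
  have hs := (hasSum_zeta_nat (k := n) (by omega)).tsum_eq
  have hpos := zsum_pos (k := 2*n) (by omega)
  have hπ : (0:ℝ) < π := Real.pi_pos
  have hfac : (0:ℝ) < ((2*n).factorial : ℝ) := by positivity
  have h2 : ((2:ℝ))^(2*n) = 2 * (2:ℝ)^(2*n-1) := by
    rw [← pow_succ']
    congr 1
    omega
  have habs : (∑' m : ℕ, 1/(m:ℝ)^(2*n))
      = 2^(2*n-1) * π^(2*n) * |Bnum (2*n)| / (2*n).factorial := by
    have := abs_of_pos hpos
    rw [← this, hs, abs_div, abs_mul, abs_mul, abs_mul, abs_pow, abs_neg, abs_one, one_pow,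
      one_mul, abs_pow, abs_pow, abs_of_nonneg (by norm_num : (0:ℝ) ≤ (2:ℝ)),
      abs_of_nonneg hπ.le, abs_of_nonneg hfac.le]
    rfl
  rw [habs, mul_pow, h2]
  field_simp

theorem stmt12 (n : ℕ) (hn : 1 ≤ n) :
    sSup ((fun t : ℝ => |B (2*n+1) t|) '' Icc (0:ℝ) 1) < ((2*n+1 : ℝ)/(2*π)) * |Bnum (2*n)| := by
  have hπ : (0:ℝ) < π := Real.pi_pos
  have hfac : (0:ℝ) < ((2*n+1).factorial : ℝ) := by positivity
  have hK : (0:ℝ) < 2 * (2*n+1).factorial / (2*π)^(2*n+1) := by positivity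
  have key : 2 * (2*n+1).factorial / (2*π)^(2*n+1) * ∑' m : ℕ, 1/(m:ℝ)^(2*n+1)
      < ((2*n+1 : ℝ)/(2*π)) * |Bnum (2*n)| := by
    have h1 : (∑' m : ℕ, 1/(m:ℝ)^(2*n+1)) < ∑' m : ℕ, 1/(m:ℝ)^(2*n) :=
      zsum_lt (by omega)
    have h2 : 2 * ((2*n+1).factorial : ℝ) / (2*π)^(2*n+1) * ∑' m : ℕ, 1/(m:ℝ)^(2*n)
        = ((2*n+1 : ℝ)/(2*π)) * |Bnum (2*n)| := by
      rw [← Bnum_eq n hn]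
      have hf : ((2*n+1).factorial : ℝ) = (2*n+1 : ℝ) * (2*n).factorial := by
        rw [show 2*n+1 = (2*n) + 1 from rfl, Nat.factorial_succ]
        push_cast; ring
      rw [hf, pow_succ]
      have hfac2 : (0:ℝ) < ((2*n).factorial : ℝ) := by positivity
      field_simp
    calc 2 * ((2*n+1).factorial : ℝ) / (2*π)^(2*n+1) * ∑' m : ℕ, 1/(m:ℝ)^(2*n+1)
        < 2 * ((2*n+1).factorial : ℝ) / (2*π)^(2*n+1) * ∑' m : ℕ, 1/(m:ℝ)^(2*n) := by
          exact mul_lt_mul_of_pos_left h1 hK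
      _ = ((2*n+1 : ℝ)/(2*π)) * |Bnum (2*n)| := h2
  refine lt_of_le_of_lt ?_ key
  apply csSup_le
  · exact (nonempty_Icc.mpr zero_le_one).image _
  · rintro x ⟨t, ht, rfl⟩
    exact B_bound n hn ht
end

section
/- For every nonnegative integer n and every real t with 0 < t < 1/4, one has (-1)^{n+1} B_{2n}(t) < |B_{2n}| \cos(2\pi t), where B_{2n} is the 2n-th Bernoulli number. -/
open Set Real Filter

open scoped Nat

/-!
For `m ≠ 0` and `t ∈ [0, 1]` the Fourier expansion of `B_{2m}` reads
`∑ₖ cos (2πkt) / k^{2m} = (-1)^{m+1} (2π)^{2m} / (2 (2m)!) · B_{2m}(t)`; at `t = 0` it gives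
`ζ(2m)`, so `(-1)^{m+1} B_{2m} = |B_{2m}|` and, with `c = cos (2πt)`, the claim becomes
`∑ₖ (c - cos (2πkt)) / k^{2m} > 0`. The `k = 1` term vanishes, the `k = 2` term equals
`(1 - c)(1 + 2c) / 4^m`, and every later term is at least `-(1 - c) / k^{2m}`; for `m ≥ 2` the
tail `∑_{k ≥ 3} k^{-2m}` is at most `4^{-m}` (compare with `ζ(4) = π⁴/90`), which suffices.
For `m = 1` the claim is `6t² - 6t + 1 < cos (2πt)`, which follows from the chord bound
`1 - 4t ≤ cos (2πt)`, and for `m = 0` it is `-1 < cos (2πt)`.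
-/

lemma cos_two_pi_mul_mem_Ioo {t : ℝ} (ht : 0 < t) (ht' : t < 1 / 4) :
    cos (2 * π * t) ∈ Ioo 0 1 := by
  have hπ := pi_pos
  refine ⟨cos_pos_of_mem_Ioo ⟨by nlinarith, by nlinarith⟩, (cos_le_one _).lt_of_ne fun h => ?_⟩
  have := (cos_eq_one_iff_of_lt_of_lt (x := 2 * π * t) (by nlinarith) (by nlinarith)).mp h
  nlinarith

lemma B_zero_right (n : ℕ) : B n 0 = Bnum n := by
  rw [B, ← map_zero (algebraMap ℚ ℝ), Polynomial.aeval_algebraMap_apply_eq_algebraMap_eval,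
    Polynomial.bernoulli_eval_zero, Bnum]
  rfl

lemma B_zero_left (t : ℝ) : B 0 t = 1 := by
  simp [B]

lemma B_two (t : ℝ) : B 2 t = t ^ 2 - t + 1 / 6 := by
  simp [B, Polynomial.bernoulli, Finset.sum_range_succ]
  ring

lemma Bnum_two : Bnum 2 = 1 / 6 := by
  simp [Bnum, bernoulli_two]

lemma B_two_lt {t : ℝ} (ht : 0 < t) (ht' : t < 1 / 4) : B 2 t < Bnum 2 * cos (2 * π * t) := by
  have hπ := pi_pos
  have hchord : 1 - 4 * t ≤ cos (2 * π * t) := by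
    convert one_sub_mul_le_cos (x := 2 * π * t) (by positivity) (by nlinarith) using 2
    field_simp
    norm_num
  rw [B_two, Bnum_two]
  nlinarith

lemma hasSum_one_div_nat_pow_mul_cos_eq_B {m : ℕ} (hm : m ≠ 0) {t : ℝ} (ht : t ∈ Icc (0 : ℝ) 1) :
    HasSum (fun k : ℕ => 1 / (k : ℝ) ^ (2 * m) * cos (2 * π * k * t))
      ((2 * π) ^ (2 * m) / 2 / (2 * m)! * ((-1) ^ (m + 1) * B (2 * m) t)) := by
  convert hasSum_one_div_nat_pow_mul_cos hm ht using 1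
  rw [B, Polynomial.aeval_def, ← Polynomial.eval_map]
  ring

lemma hasSum_one_div_nat_pow_eq_Bnum {m : ℕ} (hm : m ≠ 0) :
    HasSum (fun k : ℕ => 1 / (k : ℝ) ^ (2 * m))
      ((2 * π) ^ (2 * m) / 2 / (2 * m)! * ((-1) ^ (m + 1) * Bnum (2 * m))) := by
  simpa [B_zero_right] using hasSum_one_div_nat_pow_mul_cos_eq_B hm (t := 0) (by simp)

lemma abs_Bnum_two_mul {m : ℕ} (hm : m ≠ 0) : |Bnum (2 * m)| = (-1) ^ (m + 1) * Bnum (2 * m) := by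
  have hZ := hasSum_one_div_nat_pow_eq_Bnum hm
  have hpos : 0 < (2 * π) ^ (2 * m) / 2 / (2 * m)! * ((-1) ^ (m + 1) * Bnum (2 * m)) := by
    have h1 := le_hasSum hZ 1 (fun j _ => by positivity)
    norm_num at h1
    linarith
  have hK : 0 < (2 * π) ^ (2 * m) / 2 / (2 * m)! := by positivity
  rw [← abs_of_pos (pos_of_mul_pos_right hpos hK.le), abs_mul, abs_pow, abs_neg, abs_one, one_pow,
    one_mul]

lemma tsum_one_div_nat_add_three_pow_le {m : ℕ} (hm : 2 ≤ m) :
    ∑' k : ℕ, 1 / ((k + 3 : ℕ) : ℝ) ^ (2 * m) ≤ 1 / 2 ^ (2 * m) := by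
  have hzeta : HasSum (fun k : ℕ => 1 / ((k + 3 : ℕ) : ℝ) ^ 4) (π ^ 4 / 90 - 17 / 16) := by
    rw [show π ^ 4 / 90 - 17 / 16 = π ^ 4 / 90 - ∑ k ∈ Finset.range 3, 1 / (k : ℝ) ^ 4 by
      norm_num [Finset.sum_range_succ]]
    exact (hasSum_nat_add_iff' 3).mpr hasSum_zeta_four
  have hπ : π ^ 4 / 90 - 17 / 16 ≤ 1 / 16 := by
    have h := pow_le_pow_left₀ pi_pos.le pi_lt_d2.le 4
    norm_num at h
    linarith
  obtain ⟨j, hj⟩ : ∃ j, 2 * m = j + 4 := ⟨2 * m - 4, by omega⟩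
  have hterm (k : ℕ) :
      1 / ((k + 3 : ℕ) : ℝ) ^ (2 * m) ≤ 16 / 2 ^ (2 * m) * (1 / ((k + 3 : ℕ) : ℝ) ^ 4) := by
    have hx : (2 : ℝ) ≤ ((k + 3 : ℕ) : ℝ) := by push_cast; linarith [k.cast_nonneg (α := ℝ)]
    have hpow : (2 : ℝ) ^ j ≤ ((k + 3 : ℕ) : ℝ) ^ j := pow_le_pow_left₀ zero_le_two hx j
    calc 1 / ((k + 3 : ℕ) : ℝ) ^ (2 * m) ≤ 1 / (2 ^ j * ((k + 3 : ℕ) : ℝ) ^ 4) := by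
          rw [hj, pow_add]
          gcongr
      _ = 16 / 2 ^ (2 * m) * (1 / ((k + 3 : ℕ) : ℝ) ^ 4) := by
          rw [hj, pow_add]
          ring
  calc ∑' k : ℕ, 1 / ((k + 3 : ℕ) : ℝ) ^ (2 * m)
      ≤ ∑' k : ℕ, 16 / 2 ^ (2 * m) * (1 / ((k + 3 : ℕ) : ℝ) ^ 4) :=
        Summable.tsum_le_tsum hterm
          ((summable_nat_add_iff 3).mpr (Real.summable_one_div_nat_pow.mpr (by omega)))
          (hzeta.summable.mul_left _)
    _ = 16 / 2 ^ (2 * m) * (π ^ 4 / 90 - 17 / 16) := by rw [tsum_mul_left, hzeta.tsum_eq]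
    _ ≤ 1 / 2 ^ (2 * m) := by
      rw [div_mul_eq_mul_div, div_le_div_iff_of_pos_right (by positivity)]
      linarith

lemma tsum_one_div_nat_pow_mul_cos_lt {m : ℕ} (hm : 2 ≤ m) {t : ℝ} (ht : 0 < t) (ht' : t < 1 / 4) :
    ∑' k : ℕ, 1 / (k : ℝ) ^ (2 * m) * cos (2 * π * k * t)
      < cos (2 * π * t) * ∑' k : ℕ, 1 / (k : ℝ) ^ (2 * m) := by
  obtain ⟨hc0, hc1⟩ := cos_two_pi_mul_mem_Ioo ht ht'
  set c := cos (2 * π * t)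
  set a : ℕ → ℝ := fun k => 1 / (k : ℝ) ^ (2 * m)
  have ha : Summable a := Real.summable_one_div_nat_pow.mpr (by omega)
  have hac : Summable (fun k : ℕ => a k * cos (2 * π * k * t)) :=
    (hasSum_one_div_nat_pow_mul_cos (by omega) ⟨ht.le, by linarith⟩).summable
  have hd : Summable (fun k : ℕ => a k * (c - cos (2 * π * k * t))) := by
    simpa only [mul_sub, mul_comm (a _) c] using (ha.mul_left c).sub hac
  suffices 0 < ∑' k : ℕ, a k * (c - cos (2 * π * k * t)) by
    simp only [mul_sub, mul_comm (a _) c] at this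
    rw [(ha.mul_left c).tsum_sub hac, tsum_mul_left] at this
    linarith
  have hhead :
      ∑ k ∈ Finset.range 3, a k * (c - cos (2 * π * k * t)) = a 2 * ((1 - c) * (1 + 2 * c)) := by
    have ha0 : a 0 = 0 := by simp [a, zero_pow (by omega : 2 * m ≠ 0)]
    have hcos2 : cos (2 * π * 2 * t) = 2 * c ^ 2 - 1 := by rw [← cos_two_mul]; ring_nf
    simp only [Finset.sum_range_succ, Finset.sum_range_zero, Nat.cast_zero, Nat.cast_one,
      Nat.cast_ofNat, mul_one, ha0, hcos2, zero_mul, zero_add, mul_zero]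
    ring
  have htail : -(1 - c) * a 2 ≤ ∑' k : ℕ, a (k + 3) * (c - cos (2 * π * (k + 3 : ℕ) * t)) := by
    have ha3 : Summable (fun k : ℕ => a (k + 3)) := (summable_nat_add_iff 3).mpr ha
    calc -(1 - c) * a 2 ≤ -(1 - c) * ∑' k : ℕ, a (k + 3) :=
          mul_le_mul_of_nonpos_left (tsum_one_div_nat_add_three_pow_le hm) (by linarith)
      _ = ∑' k : ℕ, -(1 - c) * a (k + 3) := tsum_mul_left.symm
      _ ≤ _ := by
          refine (ha3.mul_left _).tsum_le_tsum (fun k => ?_) ((summable_nat_add_iff 3).mpr hd)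
          have : 0 ≤ a (k + 3) := by positivity
          nlinarith [cos_le_one (2 * π * (k + 3 : ℕ) * t)]
  rw [← hd.sum_add_tsum_nat_add 3, hhead]
  have : 0 < a 2 := by positivity
  nlinarith [mul_pos (mul_pos this hc0) (sub_pos.2 hc1)]

theorem stmt14 (n : ℕ) (t : ℝ) (ht : 0 < t) (ht2 : t < 1/4) :
    (-1:ℝ)^(n+1) * B (2*n) t < |Bnum (2*n)| * Real.cos (2*π*t) := by
  match n with
  | 0 =>
    norm_num [B_zero_left, Bnum]
    linarith [(cos_two_pi_mul_mem_Ioo ht ht2).1]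
  | 1 => simpa [Bnum_two] using B_two_lt ht ht2
  | m + 2 =>
    have hm : m + 2 ≠ 0 := by omega
    have hlt := tsum_one_div_nat_pow_mul_cos_lt (by omega : 2 ≤ m + 2) ht ht2
    rw [(hasSum_one_div_nat_pow_mul_cos_eq_B hm ⟨ht.le, by linarith⟩).tsum_eq,
      (hasSum_one_div_nat_pow_eq_Bnum hm).tsum_eq, mul_left_comm] at hlt
    rw [abs_Bnum_two_mul hm]
    have hK : 0 < (2 * π) ^ (2 * (m + 2)) / 2 / (2 * (m + 2))! := by positivity
    refine lt_of_mul_lt_mul_left ?_ hK.le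
    linear_combination hlt
end

section
/- For every positive integer n, the double inequality (2^{2n}-2)(n+1)(2n+1)/((2^{2n+1}-1)\pi^2) < |B_{2n+2}/B_{2n}| < (n+1)(2n+1)/(2\pi^2) holds, where B_{2k} denotes the 2k-th Bernoulli number. -/
/-!
Euler's formula `ζ(2k) = (-1)^(k+1) (2π)^(2k) B_{2k} / (2 (2k)!)` turns the ratio into
`|B_{2n+2} / B_{2n}| = (n+1)(2n+1) / (2π²) · ζ(2n+2) / ζ(2n)`, so both bounds are bounds on
`ζ(2n+2) / ζ(2n)`. The upper one is `ζ(2n+2) < ζ(2n)`. The lower one says that the Dirichlet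
eta function `η(s) = (1 - 2^(1-s)) ζ(s)` satisfies `η(2n) < η(2n+2)`: in
`η(s+2) - η(s) = ∑ (-1)^j (j^(-s) - j^(-s-2))` the terms `j = 2k, 2k+1` pair to positive
numbers, because `x ↦ x^(-s) - x^(-s-2)` decreases on `[2, ∞)`.
-/

open Set Real Filter

-- The `n = 0` term is `1 / 0 = 0` for `s ≠ 0`, so this is `ζ(s)` for `s ≥ 2`.
noncomputable def zetaNat (s : ℕ) : ℝ := ∑' n : ℕ, 1 / (n : ℝ) ^ s

section
variable {s : ℕ}

lemma summable_one_div_nat_pow_of_two_le (hs : 2 ≤ s) :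
    Summable (fun n : ℕ => 1 / (n : ℝ) ^ s) :=
  Real.summable_one_div_nat_pow.2 (by omega)

lemma hasSum_zetaNat (hs : 2 ≤ s) : HasSum (fun n : ℕ => 1 / (n : ℝ) ^ s) (zetaNat s) :=
  (summable_one_div_nat_pow_of_two_le hs).hasSum

lemma zetaNat_pos (hs : 2 ≤ s) : 0 < zetaNat s := by
  have h := (summable_one_div_nat_pow_of_two_le hs).le_tsum 1 (fun _ _ => by positivity)
  rw [Nat.cast_one, one_pow, div_one] at h
  exact one_pos.trans_le h

lemma zetaNat_add_two_lt (hs : 2 ≤ s) : zetaNat (s + 2) < zetaNat s := by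
  refine (summable_one_div_nat_pow_of_two_le (by omega)).tsum_lt_tsum (i := 2) (fun n => ?_)
    ?_ (summable_one_div_nat_pow_of_two_le hs)
  · rcases n.eq_zero_or_pos with rfl | hn
    · simp
    · have hn : (1 : ℝ) ≤ n := by exact_mod_cast hn
      exact one_div_le_one_div_of_le (by positivity) (pow_le_pow_right₀ hn (by omega))
  · exact one_div_lt_one_div_of_lt (by positivity) (pow_lt_pow_right₀ (by norm_num) (by omega))

lemma hasSum_one_div_even_pow (hs : 2 ≤ s) :
    HasSum (fun k : ℕ => 1 / ((2 * k : ℕ) : ℝ) ^ s) (zetaNat s / 2 ^ s) := by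
  have h := (hasSum_zetaNat hs).div_const (2 ^ s)
  simp only [div_div, ← mul_pow, mul_comm _ (2 : ℝ)] at h
  exact_mod_cast h

lemma one_div_pow_sub_one_div_pow_add_two_lt {x : ℝ} (hx : 2 ≤ x) (hs : 1 ≤ s) :
    1 / (x + 1) ^ s - 1 / (x + 1) ^ (s + 2) < 1 / x ^ s - 1 / x ^ (s + 2) := by
  have hx0 : 0 < x := by linarith
  obtain ⟨r, rfl⟩ : ∃ r, s = r + 1 := ⟨s - 1, by omega⟩
  have hpow : x ^ r ≤ (x + 1) ^ r := pow_le_pow_left₀ hx0.le (by linarith) r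
  have hcore : (x ^ 2 + 2 * x) * x ^ 3 < (x ^ 2 - 1) * (x + 1) ^ 3 := by
    nlinarith [pow_pos hx0 2, pow_pos hx0 3, mul_le_mul hx hx (by norm_num) hx0.le]
  have key : ((x + 1) ^ 2 - 1) * x ^ (r + 3) < (x ^ 2 - 1) * (x + 1) ^ (r + 3) := by
    calc ((x + 1) ^ 2 - 1) * x ^ (r + 3) = (x ^ 2 + 2 * x) * x ^ 3 * x ^ r := by ring
      _ < (x ^ 2 - 1) * (x + 1) ^ 3 * (x + 1) ^ r :=
        mul_lt_mul hcore hpow (by positivity) (by nlinarith [pow_pos hx0 3])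
      _ = (x ^ 2 - 1) * (x + 1) ^ (r + 3) := by ring
  rw [show r + 1 + 2 = r + 3 by ring]
  have e1 : 1 / x ^ (r + 1) - 1 / x ^ (r + 3) = (x ^ 2 - 1) / x ^ (r + 3) := by
    field_simp; ring
  have e2 : 1 / (x + 1) ^ (r + 1) - 1 / (x + 1) ^ (r + 3) =
      ((x + 1) ^ 2 - 1) / (x + 1) ^ (r + 3) := by
    field_simp; ring
  rw [e1, e2, div_lt_div_iff₀ (by positivity) (by positivity)]
  exact key

lemma one_sub_two_div_pow_mul_zetaNat_lt (hs : 2 ≤ s) :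
    (1 - 2 / 2 ^ s) * zetaNat s < (1 - 2 / 2 ^ (s + 2)) * zetaNat (s + 2) := by
  set f : ℕ → ℝ := fun n => 1 / (n : ℝ) ^ s - 1 / (n : ℝ) ^ (s + 2) with hf_def
  set E := zetaNat s / 2 ^ s - zetaNat (s + 2) / 2 ^ (s + 2)
  have hf : HasSum f (zetaNat s - zetaNat (s + 2)) :=
    (hasSum_zetaNat hs).sub (hasSum_zetaNat (by omega))
  have heven : HasSum (fun k => f (2 * k)) E :=
    (hasSum_one_div_even_pow hs).sub (hasSum_one_div_even_pow (by omega))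
  have hodd : HasSum (fun k => f (2 * k + 1)) (zetaNat s - zetaNat (s + 2) - E) := by
    have h := (hf.summable.comp_injective fun a b h => by omega :
      Summable fun k => f (2 * k + 1)).hasSum
    rwa [← (heven.even_add_odd h).unique hf, add_sub_cancel_left]
  have hpair : ∀ k, 0 < k → 0 < f (2 * k) - f (2 * k + 1) := by
    intro k hk
    have := one_div_pow_sub_one_div_pow_add_two_lt (x := 2 * k) (by norm_cast; omega)
      (by omega : 1 ≤ s)
    simp only [hf_def]
    push_cast
    linarith
  have hpos : 0 < 2 * E - (zetaNat s - zetaNat (s + 2)) := by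
    refine hasSum_lt (i := 1) (fun k => ?_) (hpair 1 one_pos) hasSum_zero
      (by convert heven.sub hodd using 1; ring)
    rcases k.eq_zero_or_pos with rfl | hk
    · simp [hf_def, zero_pow (by omega : s ≠ 0)]
    · exact (hpair k hk).le
  have : (1 - 2 / 2 ^ (s + 2)) * zetaNat (s + 2) - (1 - 2 / 2 ^ s) * zetaNat s =
      2 * E - (zetaNat s - zetaNat (s + 2)) := by ring
  linarith

lemma one_sub_two_div_pow_div_lt_zetaNat_div (hs : 2 ≤ s) :
    (1 - 2 / 2 ^ s) / (1 - 2 / 2 ^ (s + 2)) < zetaNat (s + 2) / zetaNat s := by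
  have hd : 0 < (1 : ℝ) - 2 / 2 ^ (s + 2) := by
    rw [sub_pos, div_lt_one (by positivity)]
    calc (2 : ℝ) < 2 ^ 2 := by norm_num
      _ ≤ 2 ^ (s + 2) := pow_le_pow_right₀ (by norm_num) (by omega)
  rw [div_lt_div_iff₀ hd (zetaNat_pos hs), mul_comm (zetaNat _)]
  exact one_sub_two_div_pow_mul_zetaNat_lt hs

end

open Nat in
lemma abs_bnum_two_mul {k : ℕ} (hk : k ≠ 0) :
    |Bnum (2 * k)| = 2 * (2 * k)! * zetaNat (2 * k) / (2 * π) ^ (2 * k) := by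
  have h := congrArg abs ((hasSum_zeta_nat hk).unique (hasSum_zetaNat (by omega)))
  rw [abs_of_pos (zetaNat_pos (by omega))] at h
  simp only [abs_div, abs_mul, abs_pow, abs_neg, abs_one, one_pow, one_mul, abs_two,
    abs_of_pos pi_pos, Nat.abs_cast] at h
  have h2 : (2 : ℝ) ^ (2 * k) = 2 * 2 ^ (2 * k - 1) := by
    rw [← pow_succ' (2 : ℝ), Nat.sub_add_cancel (by omega)]
  rw [Bnum, ← h, mul_pow, h2]
  field_simp

open Nat in
lemma abs_bnum_div {k : ℕ} (hk : k ≠ 0) :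
    |Bnum (2 * k + 2) / Bnum (2 * k)| =
      (k + 1) * (2 * k + 1) / (2 * π ^ 2) * (zetaNat (2 * k + 2) / zetaNat (2 * k)) := by
  have h := abs_bnum_two_mul (k := k + 1) (by omega)
  rw [show 2 * (k + 1) = 2 * k + 2 by ring] at h
  rw [abs_div, h, abs_bnum_two_mul hk, factorial_succ, factorial_succ]
  have := zetaNat_pos (s := 2 * k) (by omega)
  field_simp
  push_cast
  ring

theorem stmt19 (n : ℕ) (hn : 1 ≤ n) :
    ((2:ℝ)^(2*n) - 2) * (n+1) * (2*n+1) / (((2:ℝ)^(2*n+1) - 1) * π^2) <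
      |Bnum (2*n+2) / Bnum (2*n)| ∧
    |Bnum (2*n+2) / Bnum (2*n)| < (n+1 : ℝ) * (2*n+1) / (2*π^2) := by
  have hs : 2 ≤ 2 * n := by omega
  have hc : 0 < (n + 1 : ℝ) * (2 * n + 1) / (2 * π ^ 2) := by positivity
  rw [abs_bnum_div (by omega)]
  constructor
  · calc ((2:ℝ)^(2*n) - 2) * (n+1) * (2*n+1) / (((2:ℝ)^(2*n+1) - 1) * π^2)
        = (n + 1 : ℝ) * (2 * n + 1) / (2 * π ^ 2) *
            ((1 - 2 / 2 ^ (2 * n)) / (1 - 2 / 2 ^ (2 * n + 2))) := by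
          rw [pow_succ, pow_add]
          field_simp
      _ < _ := mul_lt_mul_of_pos_left (one_sub_two_div_pow_div_lt_zetaNat_div hs) hc
  · exact mul_lt_of_lt_one_right hc ((div_lt_one (zetaNat_pos hs)).2 (zetaNat_add_two_lt hs))
end
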